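/- arXiv:1506.03309 — 6 statements merged into one kernel-verified Lean document; each statement's English description precedes it below -/
import Mathlib

section
/- For any nonzero univariate real polynomial f, the number of sign changes in the coefficient sequence of (x+1)·f(x) is at most the number of sign changes in the coefficient sequence of f. -/
/-!
The coefficient list of `(X + 1) * f` is `(a₀, a₀ + a₁, …, aₙ₋₁ + aₙ, aₙ)`. Sweeping from the
left, it arises from `(0, a₀, …, aₙ)` by repeatedly replacing an entry `p` followed by `x` with
`p + x`, and such a replacement never adds a sign change: a nonzero `p + x` has the sign of `p` or
of `x`. The comparison is carried through the induction with an arbitrary common entry prepended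
to both lists (`List.SignChangesLE`), which makes it stable under consing.
-/

open Polynomial

/-- Number of sign changes in the coefficient sequence, disregarding zeros. -/
noncomputable def signVar (p : Polynomial ℝ) : ℕ :=
  let l := (((List.range (p.natDegree + 1)).map fun i => p.coeff i).filter fun a => a ≠ 0)
  (l.zip l.tail).countP fun q => q.1 * q.2 < 0

/-- Substitution y = x + 1 into a bivariate polynomial. -/
noncomputable def subXX1 (f : MvPolynomial (Fin 2) ℝ) : Polynomial ℝ :=
  MvPolynomial.aeval ![Polynomial.X, Polynomial.X + 1] f

/-- `T3 d h = (x+1)^d * h(-x/(x+1))` as a polynomial. -/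
noncomputable def T3 (d : ℕ) (h : Polynomial ℝ) : Polynomial ℝ :=
  ∑ i ∈ Finset.range (d + 1),
    Polynomial.C (h.coeff i) * (-Polynomial.X) ^ i * (Polynomial.X + 1) ^ (d - i)

noncomputable def VI1 (h : Polynomial ℝ) : ℕ := signVar h
noncomputable def VI2 (h : Polynomial ℝ) : ℕ := signVar (h.comp (-1 - Polynomial.X))
noncomputable def VI3 (h : Polynomial ℝ) : ℕ := signVar (T3 h.natDegree h)

theorem mul_neg_iff_of_mul_pos {R : Type*} [Ring R] [LinearOrder R] [IsStrictOrderedRing R]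
    {a b c : R} (h : 0 < a * b) : a * c < 0 ↔ b * c < 0 := by
  rcases pos_and_pos_or_neg_and_neg_of_mul_pos h with ⟨ha, hb⟩ | ⟨ha, hb⟩ <;>
    simp [mul_neg_iff, ha, hb, ha.not_gt, hb.not_gt]

namespace List

section AdjSums

variable {R : Type*} [Add R] [Zero R]

def adjSums (p : R) (l : List R) : List R :=
  zipWith (· + ·) (p :: l) (l ++ [0])

@[simp]
theorem adjSums_nil (p : R) : adjSums p [] = [p + 0] := rfl

@[simp]
theorem adjSums_cons (p x : R) (l : List R) : adjSums p (x :: l) = (p + x) :: adjSums x l := rfl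

end AdjSums

section SignChanges

variable {R : Type*} [CommRing R] [LinearOrder R]

def signChanges (l : List R) : ℕ :=
  let m := l.filter (· ≠ 0)
  (m.zip m.tail).countP fun q => q.1 * q.2 < 0

def firstNonzero (l : List R) : R := (l.filter (· ≠ 0)).headD 0

@[simp]
theorem signChanges_nil : signChanges ([] : List R) = 0 := rfl

@[simp]
theorem firstNonzero_nil : firstNonzero ([] : List R) = 0 := rfl

@[simp]
theorem firstNonzero_cons (x : R) (l : List R) :
    firstNonzero (x :: l) = if x = 0 then firstNonzero l else x := by
  by_cases hx : x = 0 <;> simp [firstNonzero, hx]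

theorem signChanges_cons (x : R) (l : List R) :
    signChanges (x :: l) = signChanges l + if x * firstNonzero l < 0 then 1 else 0 := by
  by_cases hx : x = 0
  · simp [signChanges, hx]
  · unfold signChanges firstNonzero
    rw [filter_cons_of_pos (by simpa using hx)]
    generalize l.filter (· ≠ 0) = m
    cases m <;> simp [countP_cons, add_comm]

def SignChangesLE (l₁ l₂ : List R) : Prop :=
  ∀ s : R, signChanges (s :: l₁) ≤ signChanges (s :: l₂)

theorem SignChangesLE.trans {l₁ l₂ l₃ : List R} (h₁₂ : SignChangesLE l₁ l₂)
    (h₂₃ : SignChangesLE l₂ l₃) : SignChangesLE l₁ l₃ :=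
  fun s => (h₁₂ s).trans (h₂₃ s)

theorem SignChangesLE.cons {l₁ l₂ : List R} (h : SignChangesLE l₁ l₂) (q : R) :
    SignChangesLE (q :: l₁) (q :: l₂) := by
  intro s
  rcases eq_or_ne q 0 with rfl | hq
  · simpa [signChanges_cons] using h s
  · simpa [signChanges_cons, hq] using h q

variable [IsStrictOrderedRing R]

theorem signChanges_triple_add_le (s p x : R) :
    signChanges [s, p + x, x] ≤ signChanges [s, p, x] := by
  rcases eq_or_ne x 0 with rfl | hx
  · simp
  have hxx : 0 < x * x := mul_self_pos.2 hx
  rcases eq_or_ne p 0 with rfl | hp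
  · simp [signChanges_cons, hx, hxx.not_gt]
  rcases eq_or_ne (p + x) 0 with hpx | hpx
  · have hpx' : p * x < 0 := by
      rw [eq_neg_of_add_eq_zero_left hpx, neg_mul]
      exact neg_neg_of_pos hxx
    simp only [signChanges_cons, firstNonzero_cons, signChanges_nil, firstNonzero_nil, hpx, hx,
      hpx', if_true, if_false, mul_zero, zero_mul, lt_irrefl]
    split_ifs <;> simp
  simp only [signChanges_cons, firstNonzero_cons, signChanges_nil, firstNonzero_nil, hp, hpx, hx,
    if_false, mul_zero, lt_irrefl, zero_add, mul_comm s]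
  have hsign : 0 < (p + x) * p ∨ 0 < (p + x) * x := by
    by_contra! h
    have : (p + x) * (p + x) ≤ 0 := by linarith [mul_add (p + x) p x]
    exact hpx (mul_self_eq_zero.1 (le_antisymm this (mul_self_nonneg _)))
  rcases hsign with h | h
  · simp only [mul_neg_iff_of_mul_pos h, le_refl]
  · simp only [mul_neg_iff_of_mul_pos h, hxx.not_gt, if_false, zero_add]
    rcases lt_or_ge (p * x) 0 with hpx' | hpx'
    · simp only [hpx', if_true]
      split_ifs <;> omega
    · simp only [mul_neg_iff_of_mul_pos (c := s) (hpx'.lt_of_ne' (mul_ne_zero hp hx))]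
      exact le_add_self

theorem signChangesLE_add_cons_cons (p x : R) (l : List R) :
    SignChangesLE ((p + x) :: x :: l) (p :: x :: l) := by
  intro s
  rcases eq_or_ne x 0 with rfl | hx
  · simp
  have h := signChanges_triple_add_le s p x
  simp only [signChanges_cons, firstNonzero_cons, signChanges_nil, firstNonzero_nil, hx,
    if_false] at h ⊢
  omega

theorem signChangesLE_adjSums (p : R) (l : List R) : SignChangesLE (adjSums p l) (p :: l) := by
  induction l generalizing p with
  | nil => intro s; simp
  | cons x l ih =>
    rw [adjSums_cons]
    exact ((ih x).cons (p + x)).trans (signChangesLE_add_cons_cons p x l)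

theorem signChanges_adjSums_le (l : List R) : signChanges (adjSums 0 l) ≤ signChanges l := by
  simpa [signChanges_cons] using signChangesLE_adjSums 0 l 0

end SignChanges

end List

theorem Polynomial.coeffs_X_add_one_mul {R : Type*} [Semiring R] [Nontrivial R] {f : R[X]}
    (hf : f ≠ 0) :
    (List.range (((X + 1) * f).natDegree + 1)).map ((X + 1) * f).coeff =
      List.adjSums 0 ((List.range (f.natDegree + 1)).map f.coeff) := by
  have hdeg : ((X + 1) * f).natDegree = f.natDegree + 1 := by
    rw [← C_1, (monic_X_add_C 1).natDegree_mul' hf, natDegree_X_add_C, add_comm]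
  have hXf : 0 :: (List.range (f.natDegree + 1)).map f.coeff =
      (List.range (f.natDegree + 2)).map (X * f).coeff := by
    simp [List.range_succ_eq_map (n := f.natDegree + 1), coeff_X_mul]
  have hf0 : (List.range (f.natDegree + 1)).map f.coeff ++ [0] =
      (List.range (f.natDegree + 2)).map f.coeff := by
    simp [List.range_succ (n := f.natDegree + 1)]
  rw [List.adjSums, hXf, hf0, List.zipWith_map, List.zipWith_self, hdeg, add_mul, one_mul]
  exact List.map_congr_left fun i _ => coeff_add _ _ i

theorem stmt0 (f : Polynomial ℝ) (hf : f ≠ 0) :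
    signVar ((Polynomial.X + 1) * f) ≤ signVar f := by
  change List.signChanges (List.map _ _) ≤ List.signChanges (List.map _ _)
  rw [coeffs_X_add_one_mul hf]
  exact List.signChanges_adjSums_le _
end

section
/- If f and g are real univariate polynomials and g has at most t nonzero terms, then V(f+g) ≤ V(f) + 2t. -/
open Polynomial

noncomputable def chg : List ℝ → ℕ
  | [] => 0
  | a :: l => (match l with
    | [] => 0
    | b :: _ => if a * b < 0 then 1 else 0) + chg l

@[simp] lemma chg_nil : chg [] = 0 := rfl
@[simp] lemma chg_single (a : ℝ) : chg [a] = 0 := rfl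
@[simp] lemma chg_cons_cons (a b : ℝ) (l : List ℝ) :
    chg (a :: b :: l) = (if a * b < 0 then 1 else 0) + chg (b :: l) := rfl

lemma chg_eq : ∀ l : List ℝ,
    ((l.zip l.tail).countP fun q => q.1 * q.2 < 0) = chg l
  | [] => rfl
  | [_] => rfl
  | a :: b :: l => by
    have := chg_eq (b :: l)
    simp only [List.tail_cons, List.zip_cons_cons, List.countP_cons, chg_cons_cons,
      decide_eq_true_eq] at *
    omega

lemma chg_cons_le (a : ℝ) (l : List ℝ) : chg l ≤ chg (a :: l) := by
  cases l with
  | nil => simp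
  | cons b l => rw [chg_cons_cons]; omega

lemma chg_append_le : ∀ u v : List ℝ, chg (u ++ v) ≤ chg u + chg v + 1
  | [], v => by simp
  | [a], v => by
    cases v with
    | nil => simp
    | cons b w =>
      simp only [List.singleton_append, chg_cons_cons, chg_single]
      split_ifs <;> omega
  | a :: b :: u, v => by
    have := chg_append_le (b :: u) v
    simp only [List.cons_append, chg_cons_cons] at *
    omega

lemma chg_append_ge : ∀ u v : List ℝ, chg u + chg v ≤ chg (u ++ v)
  | [], v => by simp
  | [a], v => by simpa using chg_cons_le a v
  | a :: b :: u, v => by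
    have := chg_append_ge (b :: u) v
    simp only [List.cons_append, chg_cons_cons] at *
    omega

lemma chg_mid_le (u m v : List ℝ) (hm : m.length ≤ 1) :
    chg (u ++ m ++ v) ≤ chg u + chg v + 2 := by
  match m, hm with
  | [], _ =>
    have := chg_append_le u v
    simp only [List.append_nil]
    omega
  | [x], _ =>
    have h1 := chg_append_le u ([x] ++ v)
    have h2 := chg_append_le [x] v
    rw [List.append_assoc]
    simp only [chg_single] at h2
    omega

lemma chg_mid_ge (u m v : List ℝ) : chg u + chg v ≤ chg (u ++ m ++ v) := by
  have h1 := chg_append_ge u (m ++ v)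
  have h2 := chg_append_ge m v
  rw [List.append_assoc]
  omega

lemma signVar_eq_chg (p : Polynomial ℝ) (N : ℕ) (hN : p.natDegree < N) :
    signVar p = chg (((List.range N).map p.coeff).filter fun a => a ≠ 0) := by
  have key : ∀ k : ℕ,
      (((List.range (p.natDegree + 1 + k)).map p.coeff).filter fun a => a ≠ 0)
        = (((List.range (p.natDegree + 1)).map p.coeff).filter fun a => a ≠ 0) := by
    intro k
    rw [List.range_add, List.map_append, List.filter_append]
    have h0 : (((List.range k).map fun x => p.natDegree + 1 + x).map p.coeff).filter
        (fun a => a ≠ 0) = [] := by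
      rw [List.filter_eq_nil_iff]
      intro a ha
      simp only [List.mem_map, List.mem_range] at ha
      obtain ⟨i, ⟨j, -, rfl⟩, rfl⟩ := ha
      simp [p.coeff_eq_zero_of_natDegree_lt (show p.natDegree < p.natDegree + 1 + j by omega)]
    rw [List.map_map] at h0 ⊢
    rw [h0, List.append_nil]
  obtain ⟨k, rfl⟩ : ∃ k, N = p.natDegree + 1 + k := ⟨N - (p.natDegree + 1), by omega⟩
  rw [key k]
  simp only [signVar]
  rw [chg_eq]

lemma signVar_add_monomial_le (p : Polynomial ℝ) (n : ℕ) (c : ℝ) :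
    signVar (p + monomial n c) ≤ signVar p + 2 := by
  set q := p + monomial n c with hq
  set N := max p.natDegree (max q.natDegree n) + 1 with hN
  have hp' : p.natDegree < N := by omega
  have hq' : q.natDegree < N := by omega
  have hn : n < N := by omega
  rw [signVar_eq_chg p N hp', signVar_eq_chg q N hq']
  obtain ⟨k, hk⟩ : ∃ k, N = n + 1 + k := ⟨N - (n + 1), by omega⟩
  have decomp : ∀ r : Polynomial ℝ,
      (List.range N).map r.coeff
        = ((List.range n).map r.coeff) ++ [r.coeff n]
          ++ (List.range k).map (fun i => r.coeff (n + 1 + i)) := by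
    intro r
    rw [hk, List.range_add, List.range_succ, List.map_append, List.map_append,
      List.map_map]
    rfl
  have hcoeff : ∀ i : ℕ, i ≠ n → q.coeff i = p.coeff i := by
    intro i hi
    simp [hq, coeff_monomial, Ne.symm hi]
  have hA : (List.range n).map q.coeff = (List.range n).map p.coeff := by
    apply List.map_congr_left
    intro i hi
    exact hcoeff i (by simp only [List.mem_range] at hi; omega)
  have hB : (List.range k).map (fun i => q.coeff (n + 1 + i))
      = (List.range k).map (fun i => p.coeff (n + 1 + i)) := by
    apply List.map_congr_left
    intro i _
    exact hcoeff _ (by omega)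
  rw [decomp p, decomp q, hA, hB]
  rw [List.filter_append, List.filter_append, List.filter_append, List.filter_append]
  set fA := ((List.range n).map p.coeff).filter (fun a => decide (a ≠ 0))
  set fB := ((List.range k).map (fun i => p.coeff (n + 1 + i))).filter (fun a => decide (a ≠ 0))
  have h1 : chg (fA ++ [q.coeff n].filter (fun a => decide (a ≠ 0)) ++ fB)
      ≤ chg fA + chg fB + 2 :=
    chg_mid_le _ _ _ ((List.length_filter_le _ _).trans (by simp))
  have h2 : chg fA + chg fB ≤ chg (fA ++ [p.coeff n].filter (fun a => decide (a ≠ 0)) ++ fB) :=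
    chg_mid_ge _ _ _
  omega

theorem stmt1 (f g : Polynomial ℝ) (t : ℕ) (hg : g.support.card ≤ t) :
    signVar (f + g) ≤ signVar f + 2 * t := by
  induction t generalizing g with
  | zero =>
    have : g = 0 := Polynomial.support_eq_empty.mp
      (Finset.card_eq_zero.mp (Nat.le_zero.mp hg))
    simp [this]
  | succ t ih =>
    by_cases h0 : g = 0
    · simp only [h0, add_zero]; omega
    · obtain ⟨n, hn⟩ := (Polynomial.support_nonempty.mpr h0)
      have key : f + g = (f + g.erase n) + monomial n (g.coeff n) := by
        conv_lhs => rw [← Polynomial.monomial_add_erase g n]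
        ring
      have hcard : (g.erase n).support.card ≤ t := by
        rw [Polynomial.support_erase]
        have := Finset.card_erase_of_mem hn
        have : 1 ≤ g.support.card := Finset.card_pos.mpr ⟨n, hn⟩
        omega
      calc signVar (f + g) ≤ signVar (f + g.erase n) + 2 := by
            rw [key]; exact signVar_add_monomial_le _ n _
        _ ≤ signVar f + 2 * t + 2 := by
            have := ih (g.erase n) hcard; omega
        _ = signVar f + 2 * (t + 1) := by ring
end

section
/- Let f, g be real univariate polynomials where g has t nonzero terms. If V(f+g) = V(f) + 2t, then every exponent appearing in g with nonzero coefficient is strictly between the smallest and the largest exponents appearing in f with nonzero coefficient. -/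
open Polynomial

/-!
Changing a single coefficient of a polynomial changes the number of sign variations by at most
two, since the changed entry has at most two nonzero neighbours in the coefficient sequence; if
all coefficients on one side of it vanish, it has at most one neighbour and the change is at most
one. Adding the terms of `g` one at a time gives `V(f + g) ≤ V(f) + 2t`. If some exponent of `g`
were not strictly inside the Newton polytope of `f`, add the extreme term of `g` on that side
last: all coefficients of `f + g` beyond it vanish, so it costs at most one, and
`V(f + g) < V(f) + 2t`.
-/

noncomputable def adjSignChanges (l : List ℝ) : ℕ :=
  (l.zip l.tail).countP fun q => q.1 * q.2 < 0

noncomputable def signChanges (l : List ℝ) : ℕ :=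
  adjSignChanges (l.filter fun a => a ≠ 0)

@[simp] lemma adjSignChanges_nil : adjSignChanges [] = 0 := rfl

@[simp] lemma adjSignChanges_singleton (a : ℝ) : adjSignChanges [a] = 0 := rfl

lemma adjSignChanges_cons_cons (a b : ℝ) (l : List ℝ) :
    adjSignChanges (a :: b :: l) = (if a * b < 0 then 1 else 0) + adjSignChanges (b :: l) := by
  simp only [adjSignChanges, List.tail_cons, List.zip_cons_cons, List.countP_cons,
    decide_eq_true_eq]
  omega

lemma adjSignChanges_le_cons (a : ℝ) (l : List ℝ) :
    adjSignChanges l ≤ adjSignChanges (a :: l) := by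
  cases l with
  | nil => simp
  | cons b l => rw [adjSignChanges_cons_cons]; omega

lemma adjSignChanges_cons_le (a : ℝ) (l : List ℝ) :
    adjSignChanges (a :: l) ≤ adjSignChanges l + 1 := by
  cases l with
  | nil => simp
  | cons b l => rw [adjSignChanges_cons_cons]; split <;> omega

lemma adjSignChanges_add_le_append (l₁ l₂ : List ℝ) :
    adjSignChanges l₁ + adjSignChanges l₂ ≤ adjSignChanges (l₁ ++ l₂) := by
  induction l₁ with
  | nil => simp
  | cons a l₁ ih =>
    cases l₁ with
    | nil => simpa using adjSignChanges_le_cons a l₂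
    | cons b l₁ =>
      simp only [List.cons_append, adjSignChanges_cons_cons] at *
      omega

lemma adjSignChanges_append_le (l₁ l₂ : List ℝ) :
    adjSignChanges (l₁ ++ l₂) ≤ adjSignChanges l₁ + adjSignChanges l₂ + 1 := by
  induction l₁ with
  | nil => simp
  | cons a l₁ ih =>
    cases l₁ with
    | nil => simpa using adjSignChanges_cons_le a l₂
    | cons b l₁ =>
      simp only [List.cons_append, adjSignChanges_cons_cons] at *
      omega

lemma signChanges_singleton (a : ℝ) : signChanges [a] = 0 := by
  unfold signChanges
  rw [List.filter_singleton]
  cases decide (a ≠ 0) <;> rfl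

lemma signChanges_cons_le (a : ℝ) (l : List ℝ) :
    signChanges (a :: l) ≤ signChanges l + 1 := by
  unfold signChanges
  rw [List.filter_cons]
  split
  · exact adjSignChanges_cons_le a _
  · omega

lemma signChanges_le_cons (a : ℝ) (l : List ℝ) : signChanges l ≤ signChanges (a :: l) := by
  unfold signChanges
  rw [List.filter_cons]
  split
  · exact adjSignChanges_le_cons a _
  · rfl

lemma signChanges_add_le_append (l₁ l₂ : List ℝ) :
    signChanges l₁ + signChanges l₂ ≤ signChanges (l₁ ++ l₂) := by
  unfold signChanges
  rw [List.filter_append]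
  exact adjSignChanges_add_le_append _ _

lemma signChanges_append_le (l₁ l₂ : List ℝ) :
    signChanges (l₁ ++ l₂) ≤ signChanges l₁ + signChanges l₂ + 1 := by
  unfold signChanges
  rw [List.filter_append]
  exact adjSignChanges_append_le _ _

lemma filter_ne_zero_eq_nil {l : List ℝ} (hl : ∀ z ∈ l, z = 0) :
    (l.filter fun a => a ≠ 0) = [] :=
  List.filter_eq_nil_iff.mpr fun z hz => by simpa using hl z hz

lemma signChanges_append_of_forall_eq_zero_left {l₁ : List ℝ} (l₂ : List ℝ)
    (h : ∀ z ∈ l₁, z = 0) : signChanges (l₁ ++ l₂) = signChanges l₂ := by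
  rw [signChanges, List.filter_append, filter_ne_zero_eq_nil h, List.nil_append, signChanges]

lemma signChanges_append_of_forall_eq_zero_right (l₁ : List ℝ) {l₂ : List ℝ}
    (h : ∀ z ∈ l₂, z = 0) : signChanges (l₁ ++ l₂) = signChanges l₁ := by
  rw [signChanges, List.filter_append, filter_ne_zero_eq_nil h, List.append_nil, signChanges]

lemma signChanges_middle_le (l₁ l₂ : List ℝ) (x y : ℝ) :
    signChanges (l₁ ++ x :: l₂) ≤ signChanges (l₁ ++ y :: l₂) + 2 :=
  calc signChanges (l₁ ++ x :: l₂)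
      ≤ signChanges l₁ + signChanges (x :: l₂) + 1 := signChanges_append_le _ _
    _ ≤ signChanges l₁ + signChanges (y :: l₂) + 2 := by
      have := signChanges_cons_le x l₂
      have := signChanges_le_cons y l₂
      omega
    _ ≤ signChanges (l₁ ++ y :: l₂) + 2 := by
      have := signChanges_add_le_append l₁ (y :: l₂)
      omega

lemma signChanges_middle_le_of_forall_eq_zero_left {l₁ : List ℝ} (l₂ : List ℝ) (x y : ℝ)
    (h : ∀ z ∈ l₁, z = 0) :
    signChanges (l₁ ++ x :: l₂) ≤ signChanges (l₁ ++ y :: l₂) + 1 := by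
  rw [signChanges_append_of_forall_eq_zero_left _ h,
    signChanges_append_of_forall_eq_zero_left _ h]
  have := signChanges_cons_le x l₂
  have := signChanges_le_cons y l₂
  omega

lemma signChanges_middle_le_of_forall_eq_zero_right (l₁ : List ℝ) {l₂ : List ℝ} (x y : ℝ)
    (h : ∀ z ∈ l₂, z = 0) :
    signChanges (l₁ ++ x :: l₂) ≤ signChanges (l₁ ++ y :: l₂) + 1 := by
  rw [List.append_cons, List.append_cons l₁ y, signChanges_append_of_forall_eq_zero_right _ h,
    signChanges_append_of_forall_eq_zero_right _ h]
  have := signChanges_append_le l₁ [x]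
  have := signChanges_add_le_append l₁ [y]
  rw [signChanges_singleton] at *
  omega

lemma signVar_eq_signChanges (p : ℝ[X]) {N : ℕ} (hN : p.natDegree < N) :
    signVar p = signChanges ((List.range N).map p.coeff) := by
  obtain ⟨m, rfl⟩ := Nat.exists_eq_add_of_le hN
  rw [List.range_add, List.map_append, signChanges_append_of_forall_eq_zero_right]
  · rfl
  · simp only [List.map_map, List.mem_map, List.mem_range, Function.comp_apply]
    rintro _ ⟨i, -, rfl⟩
    exact p.coeff_eq_zero_of_natDegree_lt (by omega)

lemma map_coeff_range_eq (p : ℝ[X]) (K m : ℕ) :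
    (List.range (K + 1 + m)).map p.coeff =
      (List.range K).map p.coeff ++
        p.coeff K :: (List.range m).map fun i => p.coeff (K + 1 + i) := by
  simp [List.range_add, List.range_succ, Function.comp_def]

lemma exists_signVar_eq_signChanges_split {p q : ℝ[X]} {K : ℕ}
    (hpq : ∀ i ≠ K, p.coeff i = q.coeff i) : ∃ m : ℕ,
      let pre := (List.range K).map q.coeff
      let suf := (List.range m).map fun i => q.coeff (K + 1 + i)
      signVar p = signChanges (pre ++ p.coeff K :: suf) ∧
        signVar q = signChanges (pre ++ q.coeff K :: suf) := by
  refine ⟨p.natDegree + q.natDegree, ?_⟩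
  have hpre : (List.range K).map p.coeff = (List.range K).map q.coeff :=
    List.map_congr_left fun i hi => hpq i (by simp at hi; omega)
  have hsuf : ∀ m, ((List.range m).map fun i => p.coeff (K + 1 + i)) =
      (List.range m).map fun i => q.coeff (K + 1 + i) :=
    fun m => List.map_congr_left fun i _ => hpq _ (by omega)
  constructor
  · rw [signVar_eq_signChanges p (N := K + 1 + (p.natDegree + q.natDegree)) (by omega),
      map_coeff_range_eq, hpre, hsuf]
  · rw [signVar_eq_signChanges q (N := K + 1 + (p.natDegree + q.natDegree)) (by omega),
      map_coeff_range_eq]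

section

variable {p q : ℝ[X]} {K : ℕ}

lemma signVar_le_add_two_of_coeff_eq (hpq : ∀ i ≠ K, p.coeff i = q.coeff i) :
    signVar p ≤ signVar q + 2 := by
  obtain ⟨m, hp, hq⟩ := exists_signVar_eq_signChanges_split hpq
  rw [hp, hq]
  exact signChanges_middle_le _ _ _ _

lemma signVar_le_add_one_of_coeff_eq_of_coeff_lt (hpq : ∀ i ≠ K, p.coeff i = q.coeff i)
    (hq : ∀ i < K, q.coeff i = 0) : signVar p ≤ signVar q + 1 := by
  obtain ⟨m, hp, hq'⟩ := exists_signVar_eq_signChanges_split hpq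
  rw [hp, hq']
  refine signChanges_middle_le_of_forall_eq_zero_left _ _ _ ?_
  simp only [List.mem_map, List.mem_range]
  rintro _ ⟨i, hi, rfl⟩
  exact hq i hi

lemma signVar_le_add_one_of_coeff_eq_of_coeff_gt (hpq : ∀ i ≠ K, p.coeff i = q.coeff i)
    (hq : ∀ i, K < i → q.coeff i = 0) : signVar p ≤ signVar q + 1 := by
  obtain ⟨m, hp, hq'⟩ := exists_signVar_eq_signChanges_split hpq
  rw [hp, hq']
  refine signChanges_middle_le_of_forall_eq_zero_right _ _ _ ?_
  simp only [List.mem_map, List.mem_range]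
  rintro _ ⟨i, -, rfl⟩
  exact hq _ (by omega)

end

lemma coeff_add_erase_of_ne (f g : ℝ[X]) {K : ℕ} :
    ∀ i ≠ K, (f + g).coeff i = (f + g.erase K).coeff i := by
  intro i hi
  simp [hi]

lemma signVar_add_le (f g : ℝ[X]) : signVar (f + g) ≤ signVar f + 2 * g.support.card := by
  induction hn : g.support.card generalizing g with
  | zero => simp_all [support_eq_empty]
  | succ n ih =>
    obtain ⟨K, hK⟩ := Finset.card_pos.mp (by omega : 0 < g.support.card)
    have herase := ih (g.erase K) (by rw [support_erase, Finset.card_erase_of_mem hK, hn]; rfl)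
    have hstep := signVar_le_add_two_of_coeff_eq (K := K) (coeff_add_erase_of_ne f g)
    omega

lemma signVar_add_lt_of_le_erase_add_one (f g : ℝ[X]) {K : ℕ} (hK : K ∈ g.support)
    (h : signVar (f + g) ≤ signVar (f + g.erase K) + 1) :
    signVar (f + g) < signVar f + 2 * g.support.card := by
  have herase := signVar_add_le f (g.erase K)
  rw [support_erase, Finset.card_erase_of_mem hK] at herase
  have := Finset.card_pos.mpr ⟨K, hK⟩
  omega

lemma signVar_add_lt_of_le_natTrailingDegree (f g : ℝ[X]) {k : ℕ} (hk : k ∈ g.support)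
    (hkf : k ≤ f.natTrailingDegree) : signVar (f + g) < signVar f + 2 * g.support.card := by
  have hne : g.support.Nonempty := ⟨k, hk⟩
  set K := g.support.min' hne
  have hKk : K ≤ k := g.support.min'_le _ hk
  have hvanish : ∀ i < K, (f + g.erase K).coeff i = 0 := by
    intro i hi
    have hgi : i ∉ g.support := fun h => (g.support.min'_le _ h).not_gt hi
    simp_all [coeff_erase, f.coeff_eq_zero_of_lt_natTrailingDegree (n := i) (by omega)]
  exact signVar_add_lt_of_le_erase_add_one f g (g.support.min'_mem hne)
    (signVar_le_add_one_of_coeff_eq_of_coeff_lt (coeff_add_erase_of_ne f g) hvanish)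

lemma signVar_add_lt_of_natDegree_le (f g : ℝ[X]) {k : ℕ} (hk : k ∈ g.support)
    (hkf : f.natDegree ≤ k) : signVar (f + g) < signVar f + 2 * g.support.card := by
  have hne : g.support.Nonempty := ⟨k, hk⟩
  set K := g.support.max' hne
  have hKk : k ≤ K := g.support.le_max' _ hk
  have hvanish : ∀ i, K < i → (f + g.erase K).coeff i = 0 := by
    intro i hi
    have hgi : i ∉ g.support := fun h => (g.support.le_max' _ h).not_gt hi
    simp_all [coeff_erase, f.coeff_eq_zero_of_natDegree_lt (n := i) (by omega)]
  exact signVar_add_lt_of_le_erase_add_one f g (g.support.max'_mem hne)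
    (signVar_le_add_one_of_coeff_eq_of_coeff_gt (coeff_add_erase_of_ne f g) hvanish)

theorem stmt2_general (f g : Polynomial ℝ) (t : ℕ) (hg : g.support.card = t)
    (h : signVar (f + g) = signVar f + 2 * t) :
    ∀ k ∈ g.support, f.natTrailingDegree < k ∧ k < f.natDegree := by
  subst hg
  intro k hk
  constructor
  · by_contra! hkf
    exact (signVar_add_lt_of_le_natTrailingDegree f g hk hkf).ne h
  · by_contra! hkf
    exact (signVar_add_lt_of_natDegree_le f g hk hkf).ne h

theorem stmt2 (f g : Polynomial ℝ) (t : ℕ) (hf : f ≠ 0) (hg : g.support.card = t)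
    (h : signVar (f + g) = signVar f + 2 * t) :
    ∀ k ∈ g.support, f.natTrailingDegree < k ∧ k < f.natDegree :=
  stmt2_general f g t hg h
end

section
/- Let f ∈ ℝ[x,y] have at most t nonzero terms and set g(x) = f(x, x+1), assumed nonzero. Then the number of roots of g in the open interval (0, ∞), counted with multiplicity, is at most 2t - 2. -/
open Polynomial

/-!
By Descartes' rule of signs the positive roots of `g` are at most the sign variations of its
coefficient sequence. Expanding `f`, `g = ∑ c_v x^(a_v) (x+1)^(b_v)` with at most `t` terms.
Multiplying by `x + 1` never creates sign variations, and changing a single coefficient creates at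
most two. So factor out the least power `(x+1)^(b_j)`: what remains is the monomial `c_j x^(a_j)`
plus a sum of `t - 1` terms of the same shape, and induction on the number of terms gives
`2t - 2`.
-/

theorem List.IsChain.append_tail {α : Type*} {R : α → α → Prop}
    (hR : ∀ x a b y, R x a → R a b → R b y → R x y) {u w : List α} {a : α}
    (h : (u ++ a :: w).IsChain R) : (u ++ w.tail).IsChain R := by
  rw [List.isChain_append] at h ⊢
  obtain ⟨hu, haw, hlink⟩ := h
  refine ⟨hu, haw.tail.tail, ?_⟩
  rcases w with _ | ⟨b, _ | ⟨y, w⟩⟩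
  · simp
  · simp
  · rw [List.isChain_cons_cons, List.isChain_cons_cons] at haw
    intro x hx y' hy'
    obtain rfl : y' = y := by simpa using hy'.symm
    exact hR _ _ _ _ (hlink x hx a rfl) haw.1 haw.2.1

theorem sign_ne_sign_iff_mul_neg {α : Type*} [Ring α] [LinearOrder α] [IsStrictOrderedRing α]
    {a b : α} (ha : a ≠ 0) (hb : b ≠ 0) :
    SignType.sign a ≠ SignType.sign b ↔ a * b < 0 := by
  rcases ha.lt_or_gt with ha | ha <;> rcases hb.lt_or_gt with hb | hb <;>
    simp [ha, hb, sign_neg, sign_pos, mul_pos_of_neg_of_neg, mul_neg_of_neg_of_pos,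
      mul_neg_of_pos_of_neg, le_of_lt]

namespace Polynomial

lemma coeffList_eq_map_range {R : Type*} [Semiring R] {p : R[X]} (hp : p ≠ 0) :
    p.coeffList = (List.range (p.natDegree + 1)).reverse.map p.coeff := by
  rw [coeffList, degree_eq_natDegree hp]; rfl

variable {R : Type*} [CommRing R] [LinearOrder R] {p r : R[X]} {ks : List ℕ}

-- Exponents run from the top down, in the order of `coeffList`.
def SignChange (p : R[X]) (i j : ℕ) : Prop := j < i ∧ p.coeff i * p.coeff j < 0

structure IsSignAlternating (p : R[X]) (ks : List ℕ) : Prop where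
  coeff_ne_zero : ∀ i ∈ ks, p.coeff i ≠ 0
  isChain : ks.IsChain (SignChange p)

lemma IsSignAlternating.pairwise (h : IsSignAlternating p ks) : ks.Pairwise (· > ·) :=
  List.isChain_iff_pairwise.1 (h.isChain.imp fun _ _ hij => hij.1)

lemma IsSignAlternating.congr (h : IsSignAlternating p ks)
    (hc : ∀ i ∈ ks, p.coeff i = r.coeff i) : IsSignAlternating r ks where
  coeff_ne_zero i hi := hc i hi ▸ h.coeff_ne_zero i hi
  isChain := (List.IsChain.iff_mem.1 h.isChain).imp fun i j ⟨hi, hj, hij⟩ => by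
    rwa [SignChange, ← hc i hi, ← hc j hj]

variable [IsStrictOrderedRing R]

lemma SignChange.trans₃ {x a b y : ℕ} (hxa : SignChange p x a) (hab : SignChange p a b)
    (hby : SignChange p b y) : SignChange p x y := by
  refine ⟨hby.1.trans (hab.1.trans hxa.1), ?_⟩
  have h : p.coeff x * p.coeff y * (p.coeff a * p.coeff b) ^ 2 < 0 := by
    calc _ = p.coeff x * p.coeff a * (p.coeff a * p.coeff b) * (p.coeff b * p.coeff y) := by ring
      _ < 0 := mul_neg_of_pos_of_neg (mul_pos_of_neg_of_neg hxa.2 hab.2) hby.2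
  exact neg_of_mul_neg_left h (sq_nonneg _)

lemma IsSignAlternating.append_tail {u w : List ℕ} {a : ℕ}
    (h : IsSignAlternating p (u ++ a :: w)) : IsSignAlternating p (u ++ w.tail) where
  coeff_ne_zero i hi := h.coeff_ne_zero i <|
    ((w.tail_sublist.trans (w.sublist_cons_self a)).append_left u).subset hi
  isChain := h.isChain.append_tail (R := SignChange p) fun _ _ _ _ => SignChange.trans₃

lemma IsSignAlternating.length_le_signVariations_add_one (h : IsSignAlternating p ks) :
    ks.length ≤ p.signVariations + 1 := by
  rcases eq_or_ne p 0 with rfl | hp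
  · cases ks with
    | nil => simp
    | cons k _ => exact absurd (coeff_zero k) (h.coeff_ne_zero k (by simp))
  have hsub : ks.Sublist (List.range (p.natDegree + 1)).reverse := by
    refine List.sublist_of_subperm_of_pairwise (r := (· > ·))
      (List.subperm_of_subset h.pairwise.nodup fun i hi => ?_) h.pairwise ?_
    · simpa [Nat.lt_succ_iff] using le_natDegree_of_ne_zero (h.coeff_ne_zero i hi)
    · simpa [List.pairwise_reverse] using List.pairwise_lt_range
  have hsigns : (ks.map (fun i => SignType.sign (p.coeff i))).Sublist
      ((p.coeffList.map SignType.sign).filter (· ≠ 0)) := by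
    rw [coeffList_eq_map_range hp, List.map_map]
    have hne : (ks.map (fun i => SignType.sign (p.coeff i))).filter (· ≠ 0) =
        ks.map (fun i => SignType.sign (p.coeff i)) :=
      List.filter_eq_self.2 fun s hs => by
        obtain ⟨i, hi, rfl⟩ := List.mem_map.1 hs
        simpa using h.coeff_ne_zero i hi
    rw [← hne]
    exact (hsub.map _).filter _
  have hchain : (ks.map (fun i => SignType.sign (p.coeff i))).IsChain (· ≠ ·) := by
    rw [List.isChain_map]
    exact h.isChain.imp fun i j hij => (sign_ne_sign_iff_mul_neg
      (left_ne_zero_of_mul hij.2.ne) (right_ne_zero_of_mul hij.2.ne)).2 hij.2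
  have := hchain.length_le_length_destutter_ne hsigns
  rw [List.length_map] at this
  rw [signVariations]
  omega

lemma exists_isSignAlternating_length_eq (hp : p ≠ 0) :
    ∃ ks, IsSignAlternating p ks ∧ ks.length = p.signVariations + 1 := by
  set L := (p.coeffList.map SignType.sign).filter (· ≠ 0) with hL_def
  have hL : L = ((List.range (p.natDegree + 1)).reverse.filter
      (fun i => SignType.sign (p.coeff i) ≠ 0)).map (fun i => SignType.sign (p.coeff i)) := by
    rw [hL_def, coeffList_eq_map_range hp, List.map_map, List.filter_map]; rfl
  obtain ⟨ks, hks, hD_eq⟩ := List.sublist_map_iff.1 (hL ▸ List.destutter_sublist (· ≠ ·) L)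
  have hnz : ∀ i ∈ ks, p.coeff i ≠ 0 := fun i hi => by
    simpa using (List.mem_filter.1 (hks.subset hi)).2
  have hpw : ks.Pairwise (· > ·) := by
    refine List.Pairwise.sublist (hks.trans List.filter_sublist) ?_
    simpa [List.pairwise_reverse] using List.pairwise_lt_range
  have hsign : ks.IsChain fun i j => SignType.sign (p.coeff i) ≠ SignType.sign (p.coeff j) := by
    rw [← List.isChain_map, ← hD_eq]
    exact List.isChain_destutter _ _
  refine ⟨ks, ⟨hnz, ?_⟩, ?_⟩
  · have hgt := List.isChain_iff_getElem.1 (List.isChain_iff_pairwise.2 hpw)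
    have hne := List.isChain_iff_getElem.1 hsign
    refine List.isChain_iff_getElem.2 fun n hn => ⟨hgt n hn, ?_⟩
    exact (sign_ne_sign_iff_mul_neg (hnz _ (List.getElem_mem _)) (hnz _ (List.getElem_mem _))).1
      (hne n hn)
  · have hlen : (L.destutter (· ≠ ·)).length = ks.length := by rw [hL, hD_eq, List.length_map]
    have hL_ne : L ≠ [] := by
      obtain ⟨ls, hls⟩ := coeffList_eq_cons_leadingCoeff hp
      simp [hL_def, hls, leadingCoeff_ne_zero.2 hp]
    have : (L.destutter (· ≠ ·)).length ≠ 0 := by simpa [List.destutter_eq_nil] using hL_ne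
    change ks.length = (L.destutter (· ≠ ·)).length - 1 + 1
    omega

theorem signVariations_le_add_two_of_coeff_eq (n : ℕ) (h : ∀ i ≠ n, p.coeff i = r.coeff i) :
    p.signVariations ≤ r.signVariations + 2 := by
  rcases eq_or_ne p 0 with rfl | hp
  · simp
  obtain ⟨ks, hks, hlen⟩ := exists_isSignAlternating_length_eq hp
  by_cases hn : n ∈ ks
  · obtain ⟨u, w, rfl⟩ := List.append_of_mem hn
    have hn' : n ∉ u ++ w := (List.nodup_cons.1 (List.nodup_middle.1 hks.pairwise.nodup)).1
    have hr := hks.append_tail.congr fun i hi =>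
      h i fun hin => hn' (hin ▸ (w.tail_sublist.append_left u).subset hi)
    have := hr.length_le_signVariations_add_one
    simp only [List.length_append, List.length_cons, List.length_tail] at this hlen
    omega
  · have := (hks.congr fun i hi => h i (ne_of_mem_of_not_mem hi hn))
    have := this.length_le_signVariations_add_one
    omega

theorem signVariations_C_mul_X_pow_add_le (c : R) (n : ℕ) (p : R[X]) :
    (C c * X ^ n + p).signVariations ≤ p.signVariations + 2 :=
  signVariations_le_add_two_of_coeff_eq n fun i hi => by simp [hi]

lemma coeff_X_add_C_mul_mul_coeff_pos {a : R} (ha : 0 ≤ a) (p : R[X]) {k : ℕ}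
    (hk : ((X + C a) * p).coeff k ≠ 0) :
    0 < ((X + C a) * p).coeff k * p.coeff k ∨ 0 < ((X + C a) * p).coeff k * p.coeff (k - 1) := by
  by_contra! h
  cases k with
  | zero =>
    have hq : ((X + C a) * p).coeff 0 = a * p.coeff 0 := by simp [add_mul]
    rw [hq] at hk h
    have ha' : 0 < a := lt_of_le_of_ne ha (left_ne_zero_of_mul hk).symm
    nlinarith [mul_self_pos.2 (right_ne_zero_of_mul hk)]
  | succ j =>
    have hq : ((X + C a) * p).coeff (j + 1) = p.coeff j + a * p.coeff (j + 1) := by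
      simp [add_mul, coeff_X_mul]
    set q := ((X + C a) * p).coeff (j + 1)
    have hsq : q * q = q * p.coeff j + a * (q * p.coeff (j + 1)) := by
      nth_rw 2 [hq]; ring
    rw [Nat.add_sub_cancel] at h
    nlinarith [mul_self_pos.2 hk, mul_nonneg ha (neg_nonneg.2 h.1), h.2]

theorem signVariations_X_add_C_mul_le {a : R} (ha : 0 ≤ a) (p : R[X]) :
    ((X + C a) * p).signVariations ≤ p.signVariations := by
  rcases eq_or_ne p 0 with rfl | hp
  · simp
  set q := (X + C a) * p
  obtain ⟨ks, hks, hlen⟩ :=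
    exists_isSignAlternating_length_eq (p := q) (mul_ne_zero (X_add_C_ne_zero a) hp)
  let f : ℕ → ℕ := fun k => if 0 < q.coeff k * p.coeff k then k else k - 1
  have hf : ∀ k, k - 1 ≤ f k ∧ f k ≤ k := fun k => by dsimp only [f]; split <;> omega
  have key : ∀ k, q.coeff k ≠ 0 → 0 < q.coeff k * p.coeff (f k) := fun k hk => by
    dsimp only [f]
    split_ifs with h
    exacts [h, (coeff_X_add_C_mul_mul_coeff_pos ha p hk).resolve_left h]
  have halt : IsSignAlternating p (ks.map f) := by
    refine ⟨fun i hi => ?_, ?_⟩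
    · obtain ⟨k, hk, rfl⟩ := List.mem_map.1 hi
      exact right_ne_zero_of_mul (key k (hks.coeff_ne_zero k hk)).ne'
    · rw [List.isChain_map]
      refine hks.isChain.imp fun i j hij => ?_
      have hprod : p.coeff (f i) * p.coeff (f j) < 0 := by
        refine neg_of_mul_pos_left (b := q.coeff i * q.coeff j) ?_ hij.2.le
        calc 0 < q.coeff i * p.coeff (f i) * (q.coeff j * p.coeff (f j)) :=
              mul_pos (key i (left_ne_zero_of_mul hij.2.ne)) (key j (right_ne_zero_of_mul hij.2.ne))
          _ = _ := by ring
      have hne : f j ≠ f i := fun heq => (mul_self_nonneg _).not_gt (heq ▸ hprod)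
      exact ⟨lt_of_le_of_ne (by have := hij.1; have := hf i; have := hf j; omega) hne, hprod⟩
  simpa [hlen] using halt.length_le_signVariations_add_one

theorem signVariations_X_add_C_pow_mul_le {a : R} (ha : 0 ≤ a) (n : ℕ) (p : R[X]) :
    ((X + C a) ^ n * p).signVariations ≤ p.signVariations := by
  induction n with
  | zero => simp
  | succ n ih =>
    rw [pow_succ', mul_assoc]
    exact (signVariations_X_add_C_mul_le ha _).trans ih

theorem signVariations_sum_C_mul_X_pow_mul_X_add_one_pow_le {ι : Type*} (s : Finset ι)
    (c : ι → R) (a b : ι → ℕ) :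
    (∑ i ∈ s, C (c i) * X ^ a i * (X + 1) ^ b i).signVariations ≤ 2 * s.card - 2 := by
  classical
  -- shifting the exponents of `X + 1` down by `m` lets the induction hypothesis apply after
  -- the least power of `X + 1` has been factored out
  suffices h : ∀ m, (∀ i ∈ s, m ≤ b i) →
      (∑ i ∈ s, C (c i) * X ^ a i * (X + 1) ^ (b i - m)).signVariations ≤ 2 * s.card - 2 by
    simpa using h 0 fun _ _ => Nat.zero_le _
  refine Finset.induction_on_min_value b s (by simp) fun j s hj hmin ih m hm => ?_
  have hmj := hm j (Finset.mem_insert_self j s)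
  have hfactor : ∑ i ∈ insert j s, C (c i) * X ^ a i * (X + 1) ^ (b i - m) =
      (X + C 1) ^ (b j - m) *
        (C (c j) * X ^ a j + ∑ i ∈ s, C (c i) * X ^ a i * (X + 1) ^ (b i - b j)) := by
    rw [Finset.sum_insert hj, mul_add, Finset.mul_sum, C_1]
    congr 1
    · ring
    · refine Finset.sum_congr rfl fun i hi => ?_
      rw [show b i - m = (b j - m) + (b i - b j) by have := hmin i hi; omega, pow_add]
      ring
  rw [hfactor, Finset.card_insert_of_notMem hj]
  refine (signVariations_X_add_C_pow_mul_le zero_le_one _ _).trans ?_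
  rcases s.eq_empty_or_nonempty with rfl | hs
  · simp [C_mul_X_pow_eq_monomial, signVariations_monomial]
  · have := ih (b j) hmin
    have := signVariations_C_mul_X_pow_add_le (c j) (a j)
      (∑ i ∈ s, C (c i) * X ^ a i * (X + 1) ^ (b i - b j))
    have := hs.card_pos
    omega

end Polynomial

lemma subXX1_eq_sum (f : MvPolynomial (Fin 2) ℝ) :
    subXX1 f = ∑ v ∈ f.support, C (f.coeff v) * X ^ v 0 * (X + 1) ^ v 1 := by
  rw [subXX1, MvPolynomial.aeval_def, MvPolynomial.eval₂_eq']
  simp [Fin.prod_univ_two, mul_assoc]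

theorem stmt9 (f : MvPolynomial (Fin 2) ℝ) (t : ℕ) (ht : f.support.card ≤ t)
    (hg : subXX1 f ≠ 0) :
    ((((subXX1 f).roots.filter fun x => 0 < x).card : ℤ)) ≤ 2 * t - 2 := by
  have hpos : 0 < f.support.card :=
    Finset.card_pos.2 (MvPolynomial.support_nonempty.2 fun hf => hg (by simp [hf, subXX1]))
  have hroots := (subXX1 f).roots_countP_pos_le_signVariations
  have hsv := signVariations_sum_C_mul_X_pow_mul_X_add_one_pow_le f.support (f.coeff ·) (· 0) (· 1)
  rw [← subXX1_eq_sum, ← Multiset.countP_eq_card_filter] at *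
  omega
end

section
/- Let g(x) = a(x+1)^{l_1} + b x^{k_2}(x+1)^{l_2} + x^{k_3} with a, b nonzero reals, k_2, k_3 > 0, l_2 ≥ 0, l_1 > k_2 + l_2 and l_1 > k_3. If k_2 ≤ k_3 ≤ k_2 + l_2, then g has at most two roots (with multiplicity) in (-∞, -1) and at most two roots (with multiplicity) in (-1, 0). -/
/-!
Put `Q = x^k₂ (x+1)^l₂` and let `I` be an interval avoiding `0` and `-1`. By Rolle's theorem for
`g / Q`, `g` has at most one more root in `I` (with multiplicity) than the Wronskian
`W(Q, g) = Q g' - Q' g`. Since `W(Q, Q) = 0` the `b`-term drops out, and `x (x+1) W(Q, g) = Q W₂`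
with `W₂ = a (x+1)^l₁ ((l₁-l₂-k₂) x - k₂) + x^k₃ ((k₃-k₂-l₂) x + (k₃-k₂))`. Repeating the step
for `W₂`, with `x^k₃ ((k₃-k₂-l₂) x + (k₃-k₂))` in place of `Q`, leaves `a x^k₃ (x+1)^l₁ N` with a
cubic `N` that is positive on `(-∞, -1)` and on `(-1, 0)` when `k₂ ≤ k₃ ≤ k₂ + l₂`. So `W₂` has at
most one root in `I`, and `g` at most two.
-/

open Polynomial

open Set

namespace Polynomial

section CommRing

variable {R : Type*} [CommRing R]

theorem mul_derivative_pow (p : R[X]) (n : ℕ) :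
    p * derivative (p ^ n) = C (n : R) * p ^ n * derivative p := by
  cases n with
  | zero => simp
  | succ n => rw [derivative_pow_succ]; push_cast; ring

theorem X_mul_X_add_one_mul_derivative (m n : ℕ) :
    X * (X + 1) * derivative ((X : R[X]) ^ m * (X + 1) ^ n) =
      X ^ m * (X + 1) ^ n * (C (m : R) * (X + 1) + C (n : R) * X) := by
  have hX := mul_derivative_pow (X : R[X]) m
  have hX1 := mul_derivative_pow ((X : R[X]) + 1) n
  simp only [derivative_X, derivative_add, derivative_one, add_zero, mul_one] at hX hX1
  rw [derivative_mul]
  linear_combination (X + 1) ^ n * (X + 1) * hX + X ^ m * X * hX1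

theorem X_mul_X_add_one_mul_wronskian_trinomial (a b : R) (k₂ k₃ l₁ l₂ : ℕ) :
    X * (X + 1) * wronskian (X ^ k₂ * (X + 1) ^ l₂)
        (C a * (X + 1) ^ l₁ + C b * X ^ k₂ * (X + 1) ^ l₂ + X ^ k₃) =
      X ^ k₂ * (X + 1) ^ l₂ * (C a * (X + 1) ^ l₁ * (C ((l₁ : R) - l₂ - k₂) * X - C (k₂ : R)) +
        X ^ k₃ * (C ((k₃ : R) - k₂ - l₂) * X + C ((k₃ : R) - k₂))) := by
  have h₁ := X_mul_X_add_one_mul_derivative (R := R) 0 l₁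
  have h₂ := X_mul_X_add_one_mul_derivative (R := R) k₂ l₂
  have h₃ := X_mul_X_add_one_mul_derivative (R := R) k₃ 0
  simp only [pow_zero, one_mul, mul_one, Nat.cast_zero, map_zero, zero_mul, add_zero,
    zero_add] at h₁ h₃
  simp only [wronskian, derivative_add, mul_assoc (C b), derivative_C_mul, map_sub]
  linear_combination C a * (X ^ k₂ * (X + 1) ^ l₂) * h₁ + X ^ k₂ * (X + 1) ^ l₂ * h₃ -
    (C a * (X + 1) ^ l₁ + X ^ k₃) * h₂

theorem X_mul_X_add_one_mul_wronskian_binomial (a α c κ δ : R) (m n : ℕ) :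
    X * (X + 1) * wronskian (X ^ m * (C c * X + C δ))
        (C a * (X + 1) ^ n * (C α * X - C κ) + X ^ m * (C c * X + C δ)) =
      C a * (X ^ m * (X + 1) ^ n) * ((C α * X - C κ) * (C c * X + C δ) *
        (C (n : R) * X - C (m : R) * (X + 1)) + C (α * δ + c * κ) * (X * (X + 1))) := by
  have hX := mul_derivative_pow (X : R[X]) m
  have hX1 := mul_derivative_pow ((X : R[X]) + 1) n
  simp only [derivative_X, derivative_add, derivative_one, add_zero, mul_one] at hX hX1
  simp only [wronskian, derivative_mul, derivative_X, derivative_C, derivative_sub, mul_one,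
    sub_zero, add_zero, map_add, map_mul]
  linear_combination C a * X * (C α * X - C κ) * (X ^ m * (C c * X + C δ)) * hX1 -
    C a * (X + 1) * (C c * X + C δ) * (X + 1) ^ n * (C α * X - C κ) * hX

end CommRing

section Domain

variable {R : Type*} [CommRing R] [IsDomain R] {P : R → Prop} [DecidablePred P]

theorem rootMultiplicity_sub_one_le_rootMultiplicity_wronskian [CharZero R] {p q : R[X]} (x : R)
    (hW : wronskian q p ≠ 0) :
    p.rootMultiplicity x - 1 ≤ (wronskian q p).rootMultiplicity x := by
  rw [le_rootMultiplicity_iff hW]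
  have hp' : (X - C x) ^ (p.rootMultiplicity x - 1) ∣ derivative p :=
    (pow_dvd_pow _ (p.rootMultiplicity_sub_one_le_derivative_rootMultiplicity x)).trans
      (pow_rootMultiplicity_dvd _ _)
  have hp : (X - C x) ^ (p.rootMultiplicity x - 1) ∣ p :=
    (pow_dvd_pow _ (Nat.sub_le _ _)).trans (pow_rootMultiplicity_dvd _ _)
  exact dvd_sub (hp'.mul_left q) (hp.mul_left _)

theorem roots_filter_eq_zero_of_forall_eval_ne_zero {p : R[X]} (h : ∀ x, P x → p.eval x ≠ 0) :
    p.roots.filter P = 0 :=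
  Multiset.filter_eq_nil.2 fun x hx hPx => h x hPx (mem_roots'.1 hx).2

theorem roots_filter_le_of_dvd_mul {p q r : R[X]} (hqr : q * r ≠ 0) (hdvd : p ∣ q * r)
    (hq : ∀ x, P x → q.eval x ≠ 0) : p.roots.filter P ≤ r.roots.filter P :=
  calc p.roots.filter P ≤ (q * r).roots.filter P :=
        Multiset.filter_le_filter _ (roots.le_of_dvd hqr hdvd)
    _ = r.roots.filter P := by
        rw [roots_mul hqr, Multiset.filter_add, roots_filter_eq_zero_of_forall_eval_ne_zero hq,
          zero_add]

end Domain

section Real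

variable {P : ℝ → Prop} [DecidablePred P]

-- Rolle's theorem for `p / q`.
theorem exists_isRoot_wronskian_of_isRoot {p q : ℝ[X]} {x y : ℝ} (hxy : x < y)
    (hpx : p.IsRoot x) (hpy : p.IsRoot y) (hq : ∀ z ∈ Icc x y, q.eval z ≠ 0) :
    ∃ z ∈ Ioo x y, (wronskian q p).IsRoot z := by
  obtain ⟨z, hz, hz₀⟩ := exists_deriv_eq_zero hxy (p.continuousOn.div q.continuousOn hq)
    (by simp [hpx.eq_zero, hpy.eq_zero])
  have hqz := hq z (Ioo_subset_Icc_self hz)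
  rw [((p.hasDerivAt z).div (q.hasDerivAt z) hqz).deriv, div_eq_zero_iff,
    or_iff_left (pow_ne_zero 2 hqz)] at hz₀
  refine ⟨z, hz, ?_⟩
  simp only [IsRoot, wronskian, eval_sub, eval_mul]
  linarith

theorem card_roots_filter_le_wronskian {p q : ℝ[X]} (hP : {x | P x}.OrdConnected)
    (hq : ∀ x, P x → q.eval x ≠ 0) (hW : wronskian q p ≠ 0) :
    (p.roots.filter P).card ≤ ((wronskian q p).roots.filter P).card + 1 := by
  have hp : p ≠ 0 := by rintro rfl; simp at hW
  set W := wronskian q p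
  set A := (p.roots.filter P).toFinset
  set B := (W.roots.filter P).toFinset
  have mem_A {x : ℝ} : x ∈ A ↔ p.IsRoot x ∧ P x := by simp [A, mem_roots hp]
  have mem_B {x : ℝ} : x ∈ B ↔ W.IsRoot x ∧ P x := by simp [B, mem_roots hW]
  have interleave : A.card ≤ (B \ A).card + 1 := by
    refine Finset.card_le_sdiff_of_interleaved fun x hx y hy hxy _ => ?_
    rw [mem_A] at hx hy
    have hIcc := hP.out hx.2 hy.2
    obtain ⟨z, hz, hWz⟩ :=
      exists_isRoot_wronskian_of_isRoot hxy hx.1 hy.1 fun z hz => hq z (hIcc hz)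
    exact ⟨z, mem_B.2 ⟨hWz, hIcc (Ioo_subset_Icc_self hz)⟩, hz⟩
  have count_le {x : ℝ} (hx : x ∈ A) :
      (p.roots.filter P).count x ≤ (W.roots.filter P).count x + 1 := by
    rw [Multiset.count_filter_of_pos (mem_A.1 hx).2, Multiset.count_filter_of_pos (mem_A.1 hx).2,
      count_roots, count_roots]
    have : p.rootMultiplicity x - 1 ≤ W.rootMultiplicity x :=
      rootMultiplicity_sub_one_le_rootMultiplicity_wronskian x hW
    omega
  have card_le : (B \ A).card ≤ ∑ x ∈ B \ A, (W.roots.filter P).count x := by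
    rw [Finset.card_eq_sum_ones]
    refine Finset.sum_le_sum fun x hx => Multiset.count_pos.2 ?_
    exact Multiset.mem_toFinset.1 (Finset.mem_sdiff.1 hx).1
  calc (p.roots.filter P).card = ∑ x ∈ A, (p.roots.filter P).count x :=
        (Multiset.toFinset_sum_count_eq _).symm
    _ ≤ ∑ x ∈ A, ((W.roots.filter P).count x + 1) := Finset.sum_le_sum fun x hx => count_le hx
    _ = ∑ x ∈ A, (W.roots.filter P).count x + A.card := by
        rw [Finset.sum_add_distrib, Finset.card_eq_sum_ones]
    _ ≤ ∑ x ∈ A, (W.roots.filter P).count x + (∑ x ∈ B \ A, (W.roots.filter P).count x + 1) := by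
        gcongr
        exact interleave.trans (Nat.add_le_add_right card_le 1)
    _ = (W.roots.filter P).card + 1 := by
        rw [← add_assoc, ← Finset.sum_union Finset.disjoint_sdiff, Finset.union_sdiff_self_eq_union,
          Multiset.sum_count_eq_card]
        exact fun x hx => Finset.mem_union_right _ (Multiset.mem_toFinset.2 hx)

end Real

end Polynomial

theorem mul_add_pos_of_neg {c δ x : ℝ} (hc : c ≤ 0) (hδ : 0 ≤ δ) (hcδ : 0 < δ ∨ c < 0)
    (hx : x < 0) : 0 < c * x + δ := by
  rcases hcδ with h | h <;> nlinarith

theorem cubic_pos_of_neg_one_lt_of_neg {α c κ δ x : ℝ} (hα : 1 ≤ α) (hc : c ≤ 0) (hκ : 1 ≤ κ)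
    (hδ : 0 ≤ δ) (hcδ : 0 < δ ∨ c < 0) (hx₁ : -1 < x) (hx₀ : x < 0) :
    0 < (α * x - κ) * (c * x + δ) * ((α - c) * x - (κ + δ)) +
      (α * δ + c * κ) * (x * (x + 1)) := by
  have hM : 0 < c * x + δ := mul_add_pos_of_neg hc hδ hcδ hx₀
  have hxx : x * (x + 1) < 0 := by nlinarith
  have hL : α * x - κ < 0 := by nlinarith
  have hT : 1 ≤ κ + δ - (α - c) * x := by nlinarith
  rcases le_or_gt (α * δ + c * κ) 0 with he | he
  · have hLT : 0 < (α * x - κ) * ((α - c) * x - (κ + δ)) :=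
      mul_pos_of_neg_of_neg hL (by linarith)
    nlinarith [mul_pos hLT hM]
  · -- The first term is at least `(1 - α x) δ` and the second at least `α δ x`.
    have hMT : δ * 1 ≤ (c * x + δ) * (κ + δ - (α - c) * x) :=
      mul_le_mul (by nlinarith) hT zero_le_one hM.le
    have hLMT : (1 - α * x) * (δ * 1) ≤
        (κ - α * x) * ((c * x + δ) * (κ + δ - (α - c) * x)) :=
      mul_le_mul (by linarith) hMT (by positivity) (by linarith)
    have hE : α * δ * x ≤ (α * δ + c * κ) * (x * (x + 1)) := by
      nlinarith [mul_nonneg (mul_nonneg_of_nonpos_of_nonpos hc hxx.le) (by linarith : 0 ≤ κ),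
        mul_nonneg (mul_nonneg (by linarith : 0 ≤ α) hδ) (sq_nonneg x)]
    have hδ₀ : 0 < δ := by nlinarith
    nlinarith

theorem cubic_pos_of_lt_neg_one {α c κ δ x : ℝ} (hα : 1 ≤ α) (hc : c ≤ 0) (hκ : 1 ≤ κ)
    (hδ : 0 ≤ δ) (hcδ : 0 < δ ∨ c < 0) (hx : x < -1) :
    0 < (α * x - κ) * (c * x + δ) * ((α - c) * x - (κ + δ)) +
      (α * δ + c * κ) * (x * (x + 1)) := by
  have hM : 0 < c * x + δ := mul_add_pos_of_neg hc hδ hcδ (by linarith)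
  have hxx : 0 < x * (x + 1) := by nlinarith
  have hL : α * x - κ < 0 := by nlinarith
  have hT : κ - x ≤ κ + δ - (α - c) * x := by nlinarith
  rcases le_or_gt 0 (α * δ + c * κ) with he | he
  · have hLT : 0 < (α * x - κ) * ((α - c) * x - (κ + δ)) :=
      mul_pos_of_neg_of_neg hL (by linarith)
    nlinarith [mul_pos hLT hM, mul_nonneg he hxx.le]
  · -- The first term is at least `c x (κ - x)²` and the second at least `c κ x (x + 1)`.
    have hc₀ : c < 0 := by nlinarith
    have hcx : 0 < c * x := mul_pos_of_neg_of_neg hc₀ (by linarith)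
    have hMT : c * x * (κ - x) ≤ (c * x + δ) * (κ + δ - (α - c) * x) :=
      mul_le_mul (by linarith) hT (by linarith) hM.le
    have hLMT : (κ - x) * (c * x * (κ - x)) ≤
        (κ - α * x) * ((c * x + δ) * (κ + δ - (α - c) * x)) :=
      mul_le_mul (by nlinarith) hMT (mul_pos hcx (by linarith)).le (by linarith)
    have hE : c * κ * (x * (x + 1)) ≤ (α * δ + c * κ) * (x * (x + 1)) := by
      nlinarith [mul_nonneg (mul_nonneg (by linarith : 0 ≤ α) hδ) hxx.le]
    have hsum : 0 < c * x * ((κ - x) * (κ - x) + κ * (x + 1)) := mul_pos hcx (by nlinarith)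
    nlinarith

theorem cubic_pos_of_neg_of_ne_neg_one {α c κ δ x : ℝ} (hα : 1 ≤ α) (hc : c ≤ 0) (hκ : 1 ≤ κ)
    (hδ : 0 ≤ δ) (hcδ : 0 < δ ∨ c < 0) (hx₀ : x < 0) (hx₁ : x ≠ -1) :
    0 < (α * x - κ) * (c * x + δ) * ((α - c) * x - (κ + δ)) +
      (α * δ + c * κ) * (x * (x + 1)) :=
  (lt_or_gt_of_ne hx₁).elim (cubic_pos_of_lt_neg_one hα hc hκ hδ hcδ)
    fun h => cubic_pos_of_neg_one_lt_of_neg hα hc hκ hδ hcδ h hx₀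

section Count

variable {P : ℝ → Prop} [DecidablePred P]

theorem card_roots_filter_binomial_le_one_of_nondegenerate {a α c κ δ : ℝ} {m n : ℕ}
    (ha : a ≠ 0) (hα : 1 ≤ α) (hc : c ≤ 0) (hκ : 1 ≤ κ) (hδ : 0 ≤ δ) (hcδ : 0 < δ ∨ c < 0)
    (hm : (m : ℝ) = κ + δ) (hn : (n : ℝ) = α - c + m)
    (hP : {x | P x}.OrdConnected) (hneg : ∀ x, P x → x < 0) (hne : ∀ x, P x → x ≠ -1) :
    ((C a * (X + 1) ^ n * (C α * X - C κ) + X ^ m * (C c * X + C δ)).roots.filter P).card ≤ 1 := by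
  by_cases hempty : ∀ x, ¬P x
  · rw [roots_filter_eq_zero_of_forall_eval_ne_zero fun x hx => (hempty x hx).elim]
    simp
  obtain ⟨x₀, hx₀⟩ := not_forall_not.1 hempty
  set N : ℝ[X] := (C α * X - C κ) * (C c * X + C δ) * (C (n : ℝ) * X - C (m : ℝ) * (X + 1)) +
    C (α * δ + c * κ) * (X * (X + 1))
  have hN : ∀ x, P x → 0 < N.eval x := by
    intro x hx
    have hNx : N.eval x = (α * x - κ) * (c * x + δ) * ((α - c) * x - (κ + δ)) +
        (α * δ + c * κ) * (x * (x + 1)) := by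
      simp only [N, eval_add, eval_mul, eval_sub, eval_C, eval_X, eval_one, hn, hm]
      ring
    exact hNx ▸ cubic_pos_of_neg_of_ne_neg_one hα hc hκ hδ hcδ (hneg x hx) (hne x hx)
  have hF : ∀ x, P x → (C a * (X ^ m * (X + 1) ^ n)).eval x ≠ 0 := by
    intro x hx
    simp only [eval_mul, eval_pow, eval_C, eval_X, eval_add, eval_one]
    exact mul_ne_zero ha (mul_ne_zero (pow_ne_zero _ (hneg x hx).ne)
      (pow_ne_zero _ fun h => hne x hx (by linarith)))
  have hFN : C a * (X ^ m * (X + 1) ^ n) * N ≠ 0 := fun h =>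
    mul_ne_zero (hF x₀ hx₀) (hN x₀ hx₀).ne' (by simpa using congrArg (eval x₀) h)
  have hM : ∀ x, P x → (X ^ m * (C c * X + C δ)).eval x ≠ 0 := by
    intro x hx
    simp only [eval_mul, eval_pow, eval_add, eval_C, eval_X]
    exact mul_ne_zero (pow_ne_zero _ (hneg x hx).ne) (mul_add_pos_of_neg hc hδ hcδ (hneg x hx)).ne'
  have hid := X_mul_X_add_one_mul_wronskian_binomial a α c κ δ m n
  have hW : wronskian (X ^ m * (C c * X + C δ))
      (C a * (X + 1) ^ n * (C α * X - C κ) + X ^ m * (C c * X + C δ)) ≠ 0 := fun h =>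
    hFN (by rw [← hid, h, mul_zero])
  calc _ ≤ ((wronskian _ _).roots.filter P).card + 1 := card_roots_filter_le_wronskian hP hM hW
    _ ≤ (N.roots.filter P).card + 1 := by
        refine Nat.add_le_add_right (Multiset.card_le_card ?_) 1
        exact roots_filter_le_of_dvd_mul hFN (Dvd.intro_left _ hid) hF
    _ = 1 := by
        rw [roots_filter_eq_zero_of_forall_eval_ne_zero fun x hx => (hN x hx).ne']
        rfl

theorem card_roots_filter_binomial_le_one {a α c κ δ : ℝ} {m n : ℕ} (ha : a ≠ 0) (hα : 1 ≤ α)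
    (hc : c ≤ 0) (hκ : 1 ≤ κ) (hδ : 0 ≤ δ) (hm : (m : ℝ) = κ + δ) (hn : (n : ℝ) = α - c + m)
    (hP : {x | P x}.OrdConnected) (hneg : ∀ x, P x → x < 0) (hne : ∀ x, P x → x ≠ -1) :
    ((C a * (X + 1) ^ n * (C α * X - C κ) + X ^ m * (C c * X + C δ)).roots.filter P).card ≤ 1 := by
  by_cases hdeg : c = 0 ∧ δ = 0
  · obtain ⟨rfl, rfl⟩ := hdeg
    rw [roots_filter_eq_zero_of_forall_eval_ne_zero]
    · simp
    intro x hx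
    have hL : α * x - κ < 0 := by nlinarith [hneg x hx]
    simp only [eval_add, eval_mul, eval_sub, eval_pow, eval_C, eval_X, eval_one, zero_mul, mul_zero,
      add_zero]
    exact mul_ne_zero (mul_ne_zero ha (pow_ne_zero _ fun h => hne x hx (by linarith))) hL.ne
  refine card_roots_filter_binomial_le_one_of_nondegenerate ha hα hc hκ hδ ?_ hm hn hP hneg hne
  rcases hδ.lt_or_eq with h | h
  · exact Or.inl h
  · exact Or.inr (hc.lt_of_ne fun h' => hdeg ⟨h', h.symm⟩)

theorem card_roots_filter_trinomial_le_two {a b : ℝ} {k₂ k₃ l₁ l₂ : ℕ} (ha : a ≠ 0)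
    (hk₂ : 0 < k₂) (hl₁ : k₂ + l₂ < l₁) (hk₃ : k₂ ≤ k₃) (hk₃' : k₃ ≤ k₂ + l₂)
    (hP : {x | P x}.OrdConnected) (hneg : ∀ x, P x → x < 0) (hne : ∀ x, P x → x ≠ -1) :
    ((C a * (X + 1) ^ l₁ + C b * X ^ k₂ * (X + 1) ^ l₂ + X ^ k₃).roots.filter P).card ≤ 2 := by
  set Q : ℝ[X] := X ^ k₂ * (X + 1) ^ l₂
  set W₂ : ℝ[X] := C a * (X + 1) ^ l₁ * (C ((l₁ : ℝ) - l₂ - k₂) * X - C (k₂ : ℝ)) +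
    X ^ k₃ * (C ((k₃ : ℝ) - k₂ - l₂) * X + C ((k₃ : ℝ) - k₂))
  have hQ : ∀ x, P x → Q.eval x ≠ 0 := by
    intro x hx
    simp only [Q, eval_mul, eval_pow, eval_add, eval_X, eval_one]
    exact mul_ne_zero (pow_ne_zero _ (hneg x hx).ne) (pow_ne_zero _ fun h => hne x hx (by linarith))
  have hW₂ : W₂ ≠ 0 := by
    have h₀ : W₂.eval 0 = -(a * k₂) := by simp [W₂, zero_pow (show k₃ ≠ 0 by omega)]
    refine fun h => mul_ne_zero ha (Nat.cast_ne_zero.2 hk₂.ne') ?_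
    simpa [h] using h₀.symm
  have hQW₂ : Q * W₂ ≠ 0 := mul_ne_zero (fun h => by simpa [Q] using congrArg (eval 1) h) hW₂
  have hid := X_mul_X_add_one_mul_wronskian_trinomial a b k₂ k₃ l₁ l₂
  have hW : wronskian Q (C a * (X + 1) ^ l₁ + C b * X ^ k₂ * (X + 1) ^ l₂ + X ^ k₃) ≠ 0 :=
    fun h => hQW₂ (by rw [← hid, h, mul_zero])
  have hW₂_roots : (W₂.roots.filter P).card ≤ 1 := by
    have h₁ : (k₂ : ℝ) + l₂ + 1 ≤ l₁ := by exact_mod_cast hl₁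
    have h₂ : (k₂ : ℝ) ≤ k₃ := by exact_mod_cast hk₃
    have h₃ : (k₃ : ℝ) ≤ k₂ + l₂ := by exact_mod_cast hk₃'
    have h₄ : (1 : ℝ) ≤ k₂ := by exact_mod_cast hk₂
    exact card_roots_filter_binomial_le_one ha (by linarith) (by linarith) h₄ (by linarith)
      (by ring) (by ring) hP hneg hne
  calc _ ≤ ((wronskian Q _).roots.filter P).card + 1 := card_roots_filter_le_wronskian hP hQ hW
    _ ≤ (W₂.roots.filter P).card + 1 := by
        refine Nat.add_le_add_right (Multiset.card_le_card ?_) 1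
        exact roots_filter_le_of_dvd_mul hQW₂ (Dvd.intro_left _ hid) hQ
    _ ≤ 2 := by omega

end Count

theorem stmt15_general (a b : ℝ) (ha : a ≠ 0) (k₂ k₃ l₁ l₂ : ℕ)
    (hk₂ : 0 < k₂) (hl₁ : k₂ + l₂ < l₁)
    (hmid : k₂ ≤ k₃ ∧ k₃ ≤ k₂ + l₂)
    (g : Polynomial ℝ)
    (hgdef : g = Polynomial.C a * (Polynomial.X + 1) ^ l₁ +
        Polynomial.C b * Polynomial.X ^ k₂ * (Polynomial.X + 1) ^ l₂ +
        Polynomial.X ^ k₃) :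
    (g.roots.filter fun x => x < -1).card ≤ 2 ∧
      (g.roots.filter fun x => -1 < x ∧ x < 0).card ≤ 2 := by
  subst hgdef
  exact ⟨card_roots_filter_trinomial_le_two ha hk₂ hl₁ hmid.1 hmid.2 ordConnected_Iio
      (fun x hx => by linarith) (fun x hx => hx.ne),
    card_roots_filter_trinomial_le_two ha hk₂ hl₁ hmid.1 hmid.2 ordConnected_Ioo
      (fun x hx => hx.2) (fun x hx => hx.1.ne')⟩

theorem stmt15 (a b : ℝ) (ha : a ≠ 0) (hb : b ≠ 0) (k₂ k₃ l₁ l₂ : ℕ)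
    (hk₂ : 0 < k₂) (hk₃ : 0 < k₃) (hl₁ : k₂ + l₂ < l₁) (hl₁' : k₃ < l₁)
    (hmid : k₂ ≤ k₃ ∧ k₃ ≤ k₂ + l₂)
    (g : Polynomial ℝ)
    (hgdef : g = Polynomial.C a * (Polynomial.X + 1) ^ l₁ +
        Polynomial.C b * Polynomial.X ^ k₂ * (Polynomial.X + 1) ^ l₂ +
        Polynomial.X ^ k₃) :
    (g.roots.filter fun x => x < -1).card ≤ 2 ∧
      (g.roots.filter fun x => -1 < x ∧ x < 0).card ≤ 2 :=
  stmt15_general a b ha k₂ k₃ l₁ l₂ hk₂ hl₁ hmid g hgdef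
end

section
/- Let g(x) = a(x+1)^{l_1} + b x^{k_2}(x+1)^{l_2} + x^{k_3} with a < 0, b > 0, 0 < k_3 < k_2, l_2 ≥ 0, l_1 > k_2 + l_2, l_1 > k_3. If g has four roots in (0,∞), two roots in (-∞,-1) and three roots in (-1,0) (all counted with multiplicity, and these nine are all its real roots), then l_1 is odd, k_2 is odd, k_3 is even and l_2 is even. -/
open Polynomial

open Filter Set

/-!
Write `g = q * ∏ (X - r)` over the real roots `r` of `g`; the cofactor `q` has no real root, so it
has constant sign, and the sign of `g` at a non-root `t` is that of `q` times `(-1)` to the number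
of roots larger than `t`. With `g 0 = a < 0` and four positive roots this gives `g (-1) > 0` and
`g > 0` near `-∞`, which forces the degree `l₁` to be odd. Then `g (-1) > 0`, together with a root
below `-1` where otherwise every term of `g` would be positive, gives `k₃` even and `k₂ + l₂` odd.
Finally, if `k₂` were even, the substitution `y = -x / (x + 1)` writes `g` on `(-1, 0)` as
`(x + 1) ^ l₁ * P y` with `P` having a single sign change, so `P y / y` has nonvanishing derivative
in `x` and Rolle's theorem leaves room for at most one root of `g` in `(-1, 0)`, counted with
multiplicity.
-/

namespace Multiset

theorem card_filter_or_of_disjoint {α : Type*} (s : Multiset α) {p q : α → Prop}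
    [DecidablePred p] [DecidablePred q] (hpq : ∀ x, p x → ¬q x) :
    card (s.filter fun x => p x ∨ q x) = card (s.filter p) + card (s.filter q) := by
  have hpq' : s.filter (fun x => p x ∧ q x) = 0 := filter_eq_nil.2 fun x _ h => hpq x h.1 h.2
  rw [← card_add, filter_add_filter, hpq', add_zero]

theorem forall_or_of_card_filter_add_card_filter {α : Type*} {s : Multiset α} {p q : α → Prop}
    [DecidablePred p] [DecidablePred q] (hpq : ∀ x, p x → ¬q x)
    (h : card (s.filter p) + card (s.filter q) = card s) : ∀ x ∈ s, p x ∨ q x :=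
  countP_eq_card.1 (by rw [countP_eq_card_filter, card_filter_or_of_disjoint s hpq, h])

theorem neg_one_notMem_and_card_filter_neg_one_lt {s : Multiset ℝ}
    (h : card (s.filter (0 < ·)) + card (s.filter (· < -1)) +
      card (s.filter fun x => -1 < x ∧ x < 0) = card s) :
    -1 ∉ s ∧ card (s.filter (-1 < ·)) =
      card (s.filter (0 < ·)) + card (s.filter fun x => -1 < x ∧ x < 0) := by
  have hcard := card_filter_or_of_disjoint s (p := (· < -1)) (q := fun x => -1 < x ∧ x < 0)
    fun x h h' => by linarith [h'.1]
  have hmem := forall_or_of_card_filter_add_card_filter (s := s) (p := (0 < ·))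
    (q := fun x => x < -1 ∨ (-1 < x ∧ x < 0))
    (fun x h h' => by rcases h' with h' | ⟨-, h'⟩ <;> linarith) (by rw [hcard, ← add_assoc, h])
  refine ⟨fun hs => by rcases hmem _ hs with h | h | h <;> norm_num at h, ?_⟩
  rw [← card_filter_or_of_disjoint s fun x h h' => by linarith [h'.2]]
  congr 1
  refine filter_congr fun x hx => ⟨fun h => ?_, by rintro (h | ⟨h, -⟩) <;> linarith⟩
  rcases hmem x hx with h' | h' | h'
  exacts [Or.inl h', absurd h (by linarith), Or.inr h']

theorem neg_one_pow_card_filter_lt_mul_prod_pos {R : Type*} [CommRing R] [LinearOrder R]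
    [IsStrictOrderedRing R] {t : R} (s : Multiset R) (ht : t ∉ s) :
    0 < (-1) ^ card (s.filter (t < ·)) * (s.map (t - ·)).prod := by
  induction s using Multiset.induction with
  | empty => simp
  | cons r s ih =>
    rw [mem_cons, not_or] at ht
    specialize ih ht.2
    rw [map_cons, prod_cons]
    rcases lt_or_gt_of_ne ht.1 with h | h
    · rw [filter_cons_of_pos _ h, card_cons, pow_succ]
      calc (0 : R) < ((-1) ^ card (s.filter (t < ·)) * (s.map (t - ·)).prod) * (r - t) :=
            mul_pos ih (sub_pos.2 h)
        _ = _ := by ring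
    · rw [filter_cons_of_neg _ h.not_gt]
      calc (0 : R) < (t - r) * ((-1) ^ card (s.filter (t < ·)) * (s.map (t - ·)).prod) :=
            mul_pos (sub_pos.2 h) ih
        _ = _ := by ring

end Multiset

namespace Polynomial

theorem eval_mul_eval_pos_of_roots_eq_zero {q : ℝ[X]} (hq0 : q ≠ 0) (hq : q.roots = 0)
    (s t : ℝ) : 0 < q.eval s * q.eval t := by
  have hne : ∀ x, q.eval x ≠ 0 := fun x hx => by simpa [hq] using (mem_roots hq0).2 hx
  have no_sign_change : ∀ x y, 0 < q.eval x → q.eval y < 0 → False := fun x y hx hy => by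
    obtain ⟨c, -, hc⟩ := intermediate_value_uIcc q.continuous.continuousOn
      (mem_uIcc.2 (Or.inr ⟨hy.le, hx.le⟩))
    exact hne c hc
  rcases (hne s).lt_or_gt with hs | hs <;> rcases (hne t).lt_or_gt with ht | ht
  · exact mul_pos_of_neg_of_neg hs ht
  · exact (no_sign_change t s ht hs).elim
  · exact (no_sign_change s t hs ht).elim
  · exact mul_pos hs ht

theorem neg_one_pow_mul_eval_mul_eval_pos {p : ℝ[X]} {s t : ℝ} (hs : ¬p.IsRoot s)
    (ht : ¬p.IsRoot t) :
    0 < (-1) ^ (Multiset.card (p.roots.filter (s < ·)) + Multiset.card (p.roots.filter (t < ·)))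
      * (p.eval s * p.eval t) := by
  have hp : p ≠ 0 := by rintro rfl; exact hs (by simp)
  obtain ⟨q, hpq, -, hq⟩ := exists_prod_multiset_X_sub_C_mul p
  have hq0 : q ≠ 0 := by rintro rfl; exact hp (by rw [← hpq, mul_zero])
  have heval : ∀ x, p.eval x = (p.roots.map (x - ·)).prod * q.eval x := fun x => by
    conv_lhs => rw [← hpq]
    simp [eval_multiset_prod, Multiset.map_map]
  have hs' : s ∉ p.roots := fun h => hs (isRoot_of_mem_roots h)
  have ht' : t ∉ p.roots := fun h => ht (isRoot_of_mem_roots h)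
  calc 0 < (-1) ^ Multiset.card (p.roots.filter (s < ·)) * (p.roots.map (s - ·)).prod
        * ((-1) ^ Multiset.card (p.roots.filter (t < ·)) * (p.roots.map (t - ·)).prod)
        * (q.eval s * q.eval t) :=
        mul_pos (mul_pos (p.roots.neg_one_pow_card_filter_lt_mul_prod_pos hs')
          (p.roots.neg_one_pow_card_filter_lt_mul_prod_pos ht'))
          (eval_mul_eval_pos_of_roots_eq_zero hq0 hq s t)
    _ = _ := by rw [heval s, heval t, pow_add]; ring

theorem eval_pos_of_eval_neg_of_odd {p : ℝ[X]} {s t : ℝ} (hs : p.eval s < 0)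
    (ht : ¬p.IsRoot t)
    (hodd : Odd (Multiset.card (p.roots.filter (s < ·)) +
      Multiset.card (p.roots.filter (t < ·)))) :
    0 < p.eval t := by
  have h := neg_one_pow_mul_eval_mul_eval_pos (fun h => hs.ne h.eq_zero) ht
  rw [hodd.neg_one_pow, neg_one_mul, neg_pos] at h
  exact pos_of_mul_neg_right h hs.le

theorem tendsto_atBot_atBot_of_even_natDegree {P : ℝ[X]} (hdeg : 0 < P.natDegree)
    (heven : Even P.natDegree) (hP : P.leadingCoeff < 0) :
    Tendsto (fun x => P.eval x) atBot atBot := by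
  have h := (P.comp (-X)).tendsto_atBot_of_leadingCoeff_nonpos
    (by rw [← natDegree_pos_iff_degree_pos]; simpa [natDegree_comp] using hdeg)
    (by simpa [heven.neg_one_pow] using hP.le)
  simpa [Function.comp_def] using h.comp tendsto_neg_atBot_atTop

theorem odd_natDegree_of_odd_card_roots {p : ℝ[X]} (hdeg : 0 < p.natDegree)
    (hlead : p.leadingCoeff < 0) (h0 : p.eval 0 < 0)
    (hpos : Even (Multiset.card (p.roots.filter (0 < ·))))
    (hall : Odd (Multiset.card p.roots)) : Odd p.natDegree := by
  by_contra heven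
  rw [Nat.not_odd_iff_even] at heven
  have hneg := (tendsto_atBot_atBot_of_even_natDegree hdeg heven hlead).eventually_lt_atBot 0
  have hbelow : ∀ᶠ x in atBot, ∀ r ∈ p.roots.toFinset, x < r :=
    (eventually_all_finset _).2 fun r _ => eventually_lt_atBot r
  obtain ⟨x, hx, hxr⟩ := (hneg.and hbelow).exists
  have hfilter : p.roots.filter (x < ·) = p.roots :=
    Multiset.filter_eq_self.2 fun r hr => hxr r (Multiset.mem_toFinset.2 hr)
  refine hx.not_gt (eval_pos_of_eval_neg_of_odd h0 (fun h => hx.ne h.eq_zero) ?_)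
  rw [hfilter]
  exact hpos.add_odd hall

theorem eval_mul_derivative_sub_eval_pos {P : ℝ[X]} (h0 : P.coeff 0 < 0)
    (hP : ∀ i ≠ 0, 0 ≤ P.coeff i) {t : ℝ} (ht : 0 < t) :
    0 < t * P.derivative.eval t - P.eval t := by
  -- the coefficients of `Q` are `(i - 1) * P.coeff i`
  set Q := X * derivative P - P
  have hQ0 : 0 < Q.coeff 0 := by simp [Q, h0]
  have hQ_succ : ∀ i, 0 ≤ Q.coeff (i + 1) := fun i => by
    simp only [Q, coeff_sub, coeff_X_mul, coeff_derivative]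
    nlinarith [hP (i + 1) i.succ_ne_zero, (i.cast_nonneg : (0 : ℝ) ≤ i)]
  have hQt : Q.eval t = t * P.derivative.eval t - P.eval t := by simp [Q]
  rw [← hQt, eval_eq_sum_range, Finset.sum_range_succ']
  exact add_pos_of_nonneg_of_pos
    (Finset.sum_nonneg fun i _ => mul_nonneg (hQ_succ i) (by positivity)) (by simpa using hQ0)

theorem card_roots_filter_le_one_of_hasDerivAt {p : ℝ[X]} {s : Set ℝ} [DecidablePred (· ∈ s)]
    (hs : IsOpen s) (hs' : s.OrdConnected) {u φ φ' : ℝ → ℝ}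
    (hu : ∀ x ∈ s, DifferentiableAt ℝ u x) (hφu : ∀ x ∈ s, φ x = p.eval x * u x)
    (hφ : ∀ x ∈ s, HasDerivAt φ (φ' x) x) (hφ' : ∀ x ∈ s, φ' x ≠ 0) :
    Multiset.card (p.roots.filter (· ∈ s)) ≤ 1 := by
  have no_two_roots : ∀ r₁ ∈ s, ∀ r₂ ∈ s, p.IsRoot r₁ → p.IsRoot r₂ → r₁ < r₂ → False := by
    intro r₁ hr₁ r₂ hr₂ h₁ h₂ hlt
    have hIcc : Icc r₁ r₂ ⊆ s := hs'.out hr₁ hr₂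
    obtain ⟨c, hc, hc0⟩ := exists_hasDerivAt_eq_zero hlt
      (fun x hx => (hφ x (hIcc hx)).continuousAt.continuousWithinAt)
      (by rw [hφu r₁ hr₁, hφu r₂ hr₂, h₁.eq_zero, h₂.eq_zero, zero_mul, zero_mul])
      (fun x hx => hφ x (hIcc (Ioo_subset_Icc_self hx)))
    exact hφ' c (hIcc (Ioo_subset_Icc_self hc)) hc0
  have no_double_root : ∀ r ∈ s, ¬(p.IsRoot r ∧ (derivative p).IsRoot r) := by
    rintro r hr ⟨h₀, h₁⟩
    have hpu : HasDerivAt (fun x => p.eval x * u x)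
        ((derivative p).eval r * u r + p.eval r * deriv u r) r :=
      (p.hasDerivAt r).mul (hu r hr).hasDerivAt
    have hφ0 : HasDerivAt φ 0 r := by
      rw [h₀.eq_zero, h₁.eq_zero, zero_mul, zero_mul, add_zero] at hpu
      exact hpu.congr_of_eventuallyEq (eventually_of_mem (hs.mem_nhds hr) hφu)
    exact hφ' r hr ((hφ r hr).unique hφ0)
  by_contra! hcard
  by_cases hnd : (p.roots.filter (· ∈ s)).Nodup
  · rw [← Multiset.toFinset_card_of_nodup hnd, Finset.one_lt_card] at hcard
    obtain ⟨r₁, hr₁, r₂, hr₂, hne⟩ := hcard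
    simp only [Multiset.mem_toFinset, Multiset.mem_filter] at hr₁ hr₂
    rcases hne.lt_or_gt with hlt | hlt
    · exact no_two_roots r₁ hr₁.2 r₂ hr₂.2 (isRoot_of_mem_roots hr₁.1)
        (isRoot_of_mem_roots hr₂.1) hlt
    · exact no_two_roots r₂ hr₂.2 r₁ hr₁.2 (isRoot_of_mem_roots hr₂.1)
        (isRoot_of_mem_roots hr₁.1) hlt
  · obtain ⟨r, hr⟩ : ∃ r, 1 < (p.roots.filter (· ∈ s)).count r := by
      simpa [Multiset.nodup_iff_count_le_one] using hnd
    have hrs : r ∈ p.roots.filter (· ∈ s) := Multiset.count_pos.1 (by omega)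
    have hp : p ≠ 0 := by rintro rfl; simp at hr
    have hmult : 1 < p.rootMultiplicity r := by
      rw [← count_roots]
      exact hr.trans_le (Multiset.count_le_of_le r (Multiset.filter_le _ _))
    exact no_double_root r (Multiset.mem_filter.1 hrs).2
      ((one_lt_rootMultiplicity_iff_isRoot hp).1 hmult)

end Polynomial

noncomputable def xyTrinomial (a b : ℝ) (k₂ k₃ l₁ l₂ : ℕ) : ℝ[X] :=
  C a * (X + 1) ^ l₁ + C b * X ^ k₂ * (X + 1) ^ l₂ + X ^ k₃

-- For `g = xyTrinomial a b k₂ k₃ l₁ l₂` with `k₂`, `k₃` even, `n₁ = l₁ - k₂ - l₂` and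
-- `n₂ = l₁ - k₃`, this is `(1 + y) ^ l₁ * g (-y / (1 + y))`.
noncomputable def mobiusTrinomial (a b : ℝ) (k₂ k₃ n₁ n₂ : ℕ) : ℝ[X] :=
  C a + C b * X ^ k₂ * (X + 1) ^ n₁ + X ^ k₃ * (X + 1) ^ n₂

section Trinomial

variable {a b : ℝ} {k₂ k₃ l₁ l₂ n₁ n₂ : ℕ}

@[simp]
theorem eval_xyTrinomial (x : ℝ) : (xyTrinomial a b k₂ k₃ l₁ l₂).eval x =
    a * (x + 1) ^ l₁ + b * x ^ k₂ * (x + 1) ^ l₂ + x ^ k₃ := by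
  simp [xyTrinomial]

@[simp]
theorem eval_mobiusTrinomial (y : ℝ) : (mobiusTrinomial a b k₂ k₃ n₁ n₂).eval y =
    a + b * y ^ k₂ * (y + 1) ^ n₁ + y ^ k₃ * (y + 1) ^ n₂ := by
  simp [mobiusTrinomial]

theorem natDegree_xyTrinomial_tail_lt (hl₁ : k₂ + l₂ < l₁) (hl₁' : k₃ < l₁) :
    (C b * X ^ k₂ * (X + 1) ^ l₂ + X ^ k₃ : ℝ[X]).natDegree < l₁ := by
  refine (natDegree_add_le _ _).trans_lt (max_lt ((?_ : _ ≤ k₂ + l₂).trans_lt hl₁) (by simpa))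
  compute_degree

theorem natDegree_xyTrinomial (ha : a ≠ 0) (hl₁ : k₂ + l₂ < l₁) (hl₁' : k₃ < l₁) :
    (xyTrinomial a b k₂ k₃ l₁ l₂).natDegree = l₁ := by
  have : (C a * (X + 1) ^ l₁ : ℝ[X]).natDegree = l₁ := by compute_degree!
  rw [xyTrinomial, add_assoc, natDegree_add_eq_left_of_natDegree_lt, this]
  exact (natDegree_xyTrinomial_tail_lt hl₁ hl₁').trans_eq this.symm

theorem leadingCoeff_xyTrinomial (ha : a ≠ 0) (hl₁ : k₂ + l₂ < l₁) (hl₁' : k₃ < l₁) :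
    (xyTrinomial a b k₂ k₃ l₁ l₂).leadingCoeff = a := by
  have : (C a * (X + 1) ^ l₁ : ℝ[X]).natDegree = l₁ := by compute_degree!
  rw [xyTrinomial, add_assoc, leadingCoeff_add_of_degree_lt']
  · simp only [leadingCoeff_mul, leadingCoeff_C, leadingCoeff_pow]
    rw [← C_1, leadingCoeff_X_add_C, one_pow, mul_one]
  · exact degree_lt_degree ((natDegree_xyTrinomial_tail_lt hl₁ hl₁').trans_eq this.symm)

theorem coeff_mobiusTrinomial_zero (hk₂ : k₂ ≠ 0) (hk₃ : k₃ ≠ 0) :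
    (mobiusTrinomial a b k₂ k₃ n₁ n₂).coeff 0 = a := by
  simp [mobiusTrinomial, mul_assoc, hk₂.symm, hk₃.symm]

theorem coeff_mobiusTrinomial_nonneg (hb : 0 ≤ b) {i : ℕ} (hi : i ≠ 0) :
    0 ≤ (mobiusTrinomial a b k₂ k₃ n₁ n₂).coeff i := by
  simp only [mobiusTrinomial, mul_assoc, coeff_add, coeff_C, if_neg hi, coeff_C_mul,
    coeff_X_pow_mul', coeff_X_add_one_pow]
  split_ifs <;> positivity

theorem eval_xyTrinomial_eq_mul_eval_mobiusTrinomial {x y : ℝ} (hxy : (x + 1) * y = -x)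
    (hk₂ : Even k₂) (hk₃ : Even k₃) (hn₁ : l₁ = k₂ + l₂ + n₁) (hn₂ : l₁ = k₃ + n₂) :
    (xyTrinomial a b k₂ k₃ l₁ l₂).eval x =
      (x + 1) ^ l₁ * (mobiusTrinomial a b k₂ k₃ n₁ n₂).eval y := by
  have hxy' : (x + 1) * (y + 1) = 1 := by linear_combination hxy
  have e₂ : (x + 1) ^ l₁ * (b * y ^ k₂ * (y + 1) ^ n₁) = b * x ^ k₂ * (x + 1) ^ l₂ := by
    calc _ = b * ((x + 1) * y) ^ k₂ * ((x + 1) * (y + 1)) ^ n₁ * (x + 1) ^ l₂ := by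
          rw [hn₁, mul_pow, mul_pow]; ring
      _ = _ := by rw [hxy, hxy', one_pow, hk₂.neg_pow]; ring
  have e₃ : (x + 1) ^ l₁ * (y ^ k₃ * (y + 1) ^ n₂) = x ^ k₃ := by
    calc _ = ((x + 1) * y) ^ k₃ * ((x + 1) * (y + 1)) ^ n₂ := by rw [hn₂, mul_pow, mul_pow]; ring
      _ = _ := by rw [hxy, hxy', one_pow, hk₃.neg_pow, mul_one]
  rw [eval_xyTrinomial, eval_mobiusTrinomial]
  linear_combination -e₂ - e₃

theorem eval_xyTrinomial_pos_of_even (ha : a < 0) (hb : 0 < b) (hl₁ : Odd l₁)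
    (hk₂l₂ : Even (k₂ + l₂)) (hk₃ : Even k₃) {x : ℝ} (hx : x < -1) :
    0 < (xyTrinomial a b k₂ k₃ l₁ l₂).eval x := by
  have h₁ : 0 < a * (x + 1) ^ l₁ := mul_pos_of_neg_of_neg ha (hl₁.pow_neg (by linarith))
  have h₂ : 0 < x ^ k₂ * (x + 1) ^ l₂ := by
    calc 0 < (-x) ^ k₂ * (-(x + 1)) ^ l₂ :=
          mul_pos (pow_pos (by linarith) _) (pow_pos (by linarith) _)
      _ = x ^ k₂ * (x + 1) ^ l₂ := by
        rw [neg_pow x, neg_pow (x + 1), mul_mul_mul_comm, ← pow_add, hk₂l₂.neg_one_pow, one_mul]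
  have h₃ : 0 < x ^ k₃ := hk₃.pow_pos (by linarith)
  rw [eval_xyTrinomial, mul_assoc b]
  nlinarith [mul_pos hb h₂]

theorem eval_xyTrinomial_pos_of_odd (ha : a < 0) (hb : 1 < b) (hl₁ : Odd l₁) (hk₂ : Even k₂)
    (hk₃ : Odd k₃) (hk : k₃ < k₂) {x : ℝ} (hx : x < -1) :
    0 < (xyTrinomial a b k₂ k₃ l₁ 0).eval x := by
  have h₁ : 0 < a * (x + 1) ^ l₁ := mul_pos_of_neg_of_neg ha (hl₁.pow_neg (by linarith))
  have h₂ : (-x) ^ k₃ < (-x) ^ k₂ := pow_lt_pow_right₀ (by linarith) hk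
  have e₂ : x ^ k₂ = (-x) ^ k₂ := (hk₂.neg_pow x).symm
  have e₃ : x ^ k₃ = -(-x) ^ k₃ := by rw [hk₃.neg_pow, neg_neg]
  rw [eval_xyTrinomial, pow_zero, mul_one, e₂, e₃]
  nlinarith [pow_pos (by linarith : 0 < -x) k₂]

theorem even_of_eval_xyTrinomial_eq_zero (ha : a < 0) (hb : 0 < b) (hk : k₃ < k₂)
    (hl₁ : Odd l₁) (hneg_one : 0 < (xyTrinomial a b k₂ k₃ l₁ l₂).eval (-1)) {x : ℝ} (hx : x < -1)
    (hroot : (xyTrinomial a b k₂ k₃ l₁ l₂).eval x = 0) : Even k₃ := by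
  by_contra hk₃
  rw [Nat.not_even_iff_odd] at hk₃
  rw [eval_xyTrinomial, neg_add_cancel, zero_pow hl₁.pos.ne', hk₃.neg_one_pow] at hneg_one
  rcases Nat.eq_zero_or_pos l₂ with rfl | hl₂
  · have hk₂ : Even k₂ := by
      by_contra hk₂
      rw [Nat.not_even_iff_odd] at hk₂
      rw [hk₂.neg_one_pow] at hneg_one
      linarith
    rw [hk₂.neg_one_pow] at hneg_one
    exact (eval_xyTrinomial_pos_of_odd ha (by linarith) hl₁ hk₂ hk₃ hk hx).ne' hroot
  · rw [zero_pow hl₂.ne'] at hneg_one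
    linarith

theorem odd_add_of_eval_xyTrinomial_eq_zero (ha : a < 0) (hb : 0 < b) (hl₁ : Odd l₁)
    (hk₃ : Even k₃) {x : ℝ} (hx : x < -1) (hroot : (xyTrinomial a b k₂ k₃ l₁ l₂).eval x = 0) :
    Odd (k₂ + l₂) := by
  by_contra h
  exact (eval_xyTrinomial_pos_of_even ha hb hl₁ (Nat.not_odd_iff_even.1 h) hk₃ hx).ne' hroot

theorem card_roots_xyTrinomial_Ioo_le_one (ha : a < 0) (hb : 0 ≤ b) (hk₂ : k₂ ≠ 0)
    (hk₃ : k₃ ≠ 0) (hl₁ : k₂ + l₂ ≤ l₁) (hl₁' : k₃ ≤ l₁) (hk₂e : Even k₂) (hk₃e : Even k₃) :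
    Multiset.card ((xyTrinomial a b k₂ k₃ l₁ l₂).roots.filter fun x => -1 < x ∧ x < 0) ≤ 1 := by
  obtain ⟨n₁, hn₁⟩ := Nat.exists_eq_add_of_le hl₁
  obtain ⟨n₂, hn₂⟩ := Nat.exists_eq_add_of_le hl₁'
  set P := mobiusTrinomial a b k₂ k₃ n₁ n₂ with hP_def
  have hP : ∀ t, 0 < t → 0 < t * P.derivative.eval t - P.eval t := fun t ht =>
    eval_mul_derivative_sub_eval_pos (by rw [coeff_mobiusTrinomial_zero hk₂ hk₃]; exact ha)
      (fun i hi => coeff_mobiusTrinomial_nonneg hb hi) ht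
  set y : ℝ → ℝ := fun x => -x / (x + 1)
  have hy : ∀ x ∈ Ioo (-1 : ℝ) 0, 0 < y x ∧ (x + 1) * y x = -x := fun x hx => by
    have : 0 < x + 1 := by linarith [hx.1]
    exact ⟨div_pos (by linarith [hx.2]) this, mul_div_cancel₀ _ this.ne'⟩
  have hy' : ∀ x ∈ Ioo (-1 : ℝ) 0, HasDerivAt y (-1 / (x + 1) ^ 2) x := fun x hx => by
    refine ((hasDerivAt_id' x).neg.div ((hasDerivAt_id' x).add_const 1)
      (by linarith [hx.1] : x + 1 ≠ 0)).congr_deriv ?_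
    simp only [Pi.neg_apply]
    ring
  refine card_roots_filter_le_one_of_hasDerivAt (s := Ioo (-1) 0) isOpen_Ioo ordConnected_Ioo
    (u := fun x => ((x + 1) ^ l₁ * y x)⁻¹) (φ := fun x => P.eval (y x) / y x)
    (φ' := fun x => (P.derivative.eval (y x) * y x - P.eval (y x) * 1) / y x ^ 2 *
      (-1 / (x + 1) ^ 2)) (fun x hx => ?_) (fun x hx => ?_) (fun x hx => ?_) (fun x hx => ?_)
  · exact (((differentiableAt_id.add_const 1).pow l₁).mul (hy' x hx).differentiableAt).inv
      (mul_ne_zero (pow_ne_zero _ (by linarith [hx.1])) (hy x hx).1.ne')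
  · have hx1 : x + 1 ≠ 0 := by linarith [hx.1]
    rw [eval_xyTrinomial_eq_mul_eval_mobiusTrinomial (hy x hx).2 hk₂e hk₃e hn₁ hn₂, ← hP_def]
    field_simp
  · exact ((P.hasDerivAt (y x)).div (hasDerivAt_id' (y x)) (hy x hx).1.ne').comp x (hy' x hx)
  · refine (mul_neg_of_pos_of_neg (div_pos ?_ (pow_pos (hy x hx).1 2))
      (div_neg_of_neg_of_pos (by norm_num) (pow_pos (by linarith [hx.1]) 2))).ne
    linarith [hP (y x) (hy x hx).1]

end Trinomial

theorem stmt17 (a b : ℝ) (ha : a < 0) (hb : 0 < b) (k₂ k₃ l₁ l₂ : ℕ)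
    (hk₃ : 0 < k₃) (hk₂ : k₃ < k₂) (hl₁ : k₂ + l₂ < l₁) (hl₁' : k₃ < l₁)
    (g : Polynomial ℝ)
    (hgdef : g = Polynomial.C a * (Polynomial.X + 1) ^ l₁ +
        Polynomial.C b * Polynomial.X ^ k₂ * (Polynomial.X + 1) ^ l₂ +
        Polynomial.X ^ k₃)
    (h₁ : (g.roots.filter fun x => 0 < x).card = 4)
    (h₂ : (g.roots.filter fun x => x < -1).card = 2)
    (h₃ : (g.roots.filter fun x => -1 < x ∧ x < 0).card = 3)
    (hall : Multiset.card g.roots = 9) :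
    Odd l₁ ∧ Odd k₂ ∧ Even k₃ ∧ Even l₂ := by
  obtain rfl : g = xyTrinomial a b k₂ k₃ l₁ l₂ := hgdef
  have hg : xyTrinomial a b k₂ k₃ l₁ l₂ ≠ 0 := fun h => by simp [h] at hall
  have h₀ : (xyTrinomial a b k₂ k₃ l₁ l₂).eval 0 = a := by
    simp [hk₃.ne', (hk₃.trans hk₂).ne']
  obtain ⟨hm₁, hcard⟩ :=
    Multiset.neg_one_notMem_and_card_filter_neg_one_lt (by rw [h₁, h₂, h₃, hall])
  have hl₁odd : Odd l₁ := by
    rw [← natDegree_xyTrinomial (b := b) ha.ne hl₁ hl₁']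
    refine odd_natDegree_of_odd_card_roots (by rw [natDegree_xyTrinomial ha.ne hl₁ hl₁']; omega)
      ((leadingCoeff_xyTrinomial ha.ne hl₁ hl₁').trans_lt ha) (h₀.trans_lt ha)
      (by rw [h₁]; decide) (by rw [hall]; decide)
  have hg_neg_one : 0 < (xyTrinomial a b k₂ k₃ l₁ l₂).eval (-1) :=
    eval_pos_of_eval_neg_of_odd (h₀.trans_lt ha) (fun h => hm₁ ((mem_roots hg).2 h))
      (by rw [hcard, h₁, h₃]; decide)
  obtain ⟨x, hx⟩ := Multiset.card_pos_iff_exists_mem.1 (by rw [h₂]; decide : 0 < Multiset.card _)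
  obtain ⟨hxroot, hxlt⟩ := Multiset.mem_filter.1 hx
  have hroot := (isRoot_of_mem_roots hxroot).eq_zero
  have hk₃even := even_of_eval_xyTrinomial_eq_zero ha hb hk₂ hl₁odd hg_neg_one hxlt hroot
  have hk₂l₂ := odd_add_of_eval_xyTrinomial_eq_zero ha hb hl₁odd hk₃even hxlt hroot
  have hk₂odd : Odd k₂ := by
    by_contra hk₂even
    have := card_roots_xyTrinomial_Ioo_le_one ha hb.le (by omega) hk₃.ne' hl₁.le hl₁'.le
      (Nat.not_odd_iff_even.1 hk₂even) hk₃even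
    omega
  exact ⟨hl₁odd, hk₂odd, hk₃even, (Nat.odd_add.1 hk₂l₂).1 hk₂odd⟩
end
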